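/- arXiv:2304.09031 — 4 statements merged into one kernel-verified Lean document; each statement's English description precedes it below -/
import Mathlib

section
/- Let n ≥ 1 and let ξ₁, …, ξₙ be i.i.d. real random variables whose common distribution is symmetric (ξ₁ and −ξ₁ have the same law) and atomless (P(ξ₁ = a) = 0 for every a ∈ ℝ). Then P(S_k > 0 for all 1 ≤ k ≤ n) = g(n) = P(S_k ≥ 0 for all 1 ≤ k ≤ n). -/
/-!
Let `p n` be the probability that `S₁, …, Sₙ` are all positive, so `p 0 = 1`. Since the law is
atomless, ties `S_i = S_j` (`i < j`) are null, so almost surely `S₀, …, Sₙ` attain their maximum at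
exactly one index `k`. That event is the intersection of an event in `ξ₁, …, ξ_k` (`S_k` is a strict
maximum of `S₀, …, S_k`; reversing time turns it into positivity of all partial sums, probability
`p k`) and an independent event in `ξ_{k+1}, …, ξₙ` (all their partial sums are negative; by
symmetry, probability `p (n - k)`). Hence `∑_{k ≤ n} p k * p (n - k) = 1` for every `n`. The
sequence `g` satisfies the same identity, equivalent to `∑_k C(2k,k) C(2n-2k,n-k) = 4ⁿ`, and such a
self-convolution identity with `p 0 = 1` determines the sequence. Null ties also show that the
events `S_k > 0` and `S_k ≥ 0` (`1 ≤ k ≤ n`) differ by a null set.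
-/

open MeasureTheory ProbabilityTheory Finset

theorem Nat.two_mul_sum_antidiagonal_mul_centralBinom (n : ℕ) :
    2 * ∑ p ∈ antidiagonal n, p.1 * (p.1.centralBinom * p.2.centralBinom)
      = n * ∑ p ∈ antidiagonal n, p.1.centralBinom * p.2.centralBinom := by
  rw [two_mul]
  nth_rewrite 2 [← Finset.Nat.sum_antidiagonal_swap]
  rw [← sum_add_distrib, mul_sum]
  refine sum_congr rfl fun p hp => ?_
  rw [HasAntidiagonal.mem_antidiagonal] at hp
  simp only [Prod.fst_swap, Prod.snd_swap, ← hp]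
  ring

-- With `T n` this sum and `W n` the same sum weighted by `p.1`: `2 W n = n T n`, and
-- `(k + 1) C(2k+2, k+1) = 2 (2k + 1) C(2k, k)` gives `W (n + 1) = 4 W n + 2 T n`;
-- hence `T (n + 1) = 4 T n`.
theorem Nat.sum_antidiagonal_centralBinom_mul_centralBinom (n : ℕ) :
    ∑ p ∈ antidiagonal n, p.1.centralBinom * p.2.centralBinom = 4 ^ n := by
  induction n with
  | zero => simp
  | succ n ih =>
    have hstep : ∑ p ∈ antidiagonal (n + 1), p.1 * (p.1.centralBinom * p.2.centralBinom)
        = 2 * (2 * ∑ p ∈ antidiagonal n, p.1 * (p.1.centralBinom * p.2.centralBinom))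
          + 2 * ∑ p ∈ antidiagonal n, p.1.centralBinom * p.2.centralBinom := by
      rw [Finset.Nat.sum_antidiagonal_succ, zero_mul, zero_add, mul_sum, mul_sum, mul_sum,
        ← sum_add_distrib]
      refine sum_congr rfl fun p _ => ?_
      rw [← mul_assoc, succ_mul_centralBinom_succ]
      ring
    have h := two_mul_sum_antidiagonal_mul_centralBinom (n + 1)
    rw [hstep, two_mul_sum_antidiagonal_mul_centralBinom, ih] at h
    refine Nat.eq_of_mul_eq_mul_left n.succ_pos ?_
    rw [← h, Nat.succ_eq_add_one]
    ring

theorem sum_range_centralBinom_div_four_pow_mul (n : ℕ) :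
    ∑ k ∈ range (n + 1), ((k.centralBinom : ℝ) / 4 ^ k) * ((n - k).centralBinom / 4 ^ (n - k))
      = 1 := by
  have hterm : ∀ k ∈ range (n + 1),
      ((k.centralBinom : ℝ) / 4 ^ k) * ((n - k).centralBinom / 4 ^ (n - k))
        = ((k.centralBinom * (n - k).centralBinom : ℕ) : ℝ) / 4 ^ n := fun k hk => by
    rw [Nat.cast_mul, div_mul_div_comm, ← pow_add,
      Nat.add_sub_cancel' (Nat.lt_succ_iff.1 (mem_range.1 hk))]
  rw [sum_congr rfl hterm, ← sum_div, ← Nat.cast_sum,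
    ← Finset.Nat.sum_antidiagonal_eq_sum_range_succ (fun i j => i.centralBinom * j.centralBinom),
    Nat.sum_antidiagonal_centralBinom_mul_centralBinom]
  simp

theorem eq_of_sum_range_mul_self_eq {R : Type*} [CommRing R] [IsDomain R] [CharZero R]
    {a b : ℕ → R} (h0 : a 0 = b 0) (ha0 : a 0 ≠ 0)
    (h : ∀ n, ∑ k ∈ range (n + 1), a k * a (n - k) = ∑ k ∈ range (n + 1), b k * b (n - k)) :
    a = b := by
  funext n
  induction n using Nat.strong_induction_on with
  | _ n ih =>
    rcases n with _ | n
    · exact h0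
    have hn := h (n + 1)
    -- all terms but the two outer ones `a 0 * a (n + 1)` involve only indices `≤ n`
    rw [sum_range_succ, sum_range_succ', sum_range_succ, sum_range_succ',
      sum_congr rfl fun k hk => by
        rw [ih (k + 1) (by simpa using hk), ih (n + 1 - (k + 1)) (by omega)],
      Nat.sub_self, Nat.sub_zero, h0] at hn
    have h2 : (2 * b 0) * a (n + 1) = (2 * b 0) * b (n + 1) := by linear_combination hn
    exact mul_left_cancel₀ (mul_ne_zero two_ne_zero (h0 ▸ ha0)) h2

section PartialSum

variable {M : Type*}

def partialSum [AddCommMonoid M] {m : ℕ} (x : Fin m → M) (k : ℕ) : M :=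
  ∑ i : Fin m, if (i : ℕ) < k then x i else 0

theorem partialSum_zero [AddCommMonoid M] {m : ℕ} (x : Fin m → M) : partialSum x 0 = 0 := by
  simp [partialSum]

theorem partialSum_of_le [AddCommMonoid M] {m : ℕ} (x : Fin m → M) {k : ℕ} (hk : m ≤ k) :
    partialSum x k = ∑ i, x i := by
  simp [partialSum, fun i : Fin m => i.isLt.trans_le hk]

theorem partialSum_eq_sum_range [AddCommMonoid M] {m : ℕ} (x : ℕ → M) {k : ℕ} (hk : k ≤ m) :
    partialSum (fun i : Fin m => x i) k = ∑ i ∈ range k, x i := by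
  rw [partialSum, Fin.sum_univ_eq_sum_range (fun i => if i < k then x i else 0), ← sum_filter]
  congr 1
  ext i
  simp only [mem_filter, mem_range]
  omega

theorem partialSum_append_of_le [AddCommMonoid M] {a b : ℕ} (y : Fin a → M) (z : Fin b → M)
    {k : ℕ} (hk : k ≤ a) : partialSum (Fin.append y z) k = partialSum y k := by
  simp [partialSum, Fin.sum_univ_add, fun i : Fin b => (hk.trans (Nat.le_add_right a i)).not_gt]

theorem partialSum_append_add [AddCommMonoid M] {a b : ℕ} (y : Fin a → M) (z : Fin b → M)
    (k : ℕ) : partialSum (Fin.append y z) (a + k) = partialSum y a + partialSum z k := by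
  simp [partialSum, Fin.sum_univ_add, fun i : Fin a => i.isLt.trans_le (Nat.le_add_right a k)]

theorem partialSum_neg [AddCommGroup M] {m : ℕ} (x : Fin m → M) (k : ℕ) :
    partialSum (-x) k = -partialSum x k := by
  simp [partialSum, ← sum_neg_distrib, apply_ite]

theorem partialSum_rev [AddCommGroup M] {m : ℕ} (x : Fin m → M) {k : ℕ} (hk : k ≤ m) :
    partialSum (fun i => x i.rev) k = partialSum x m - partialSum x (m - k) := by
  rw [partialSum_of_le x le_rfl, eq_sub_iff_add_eq, partialSum, partialSum,
    ← Equiv.sum_comp Fin.revPerm, ← sum_add_distrib]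
  refine sum_congr rfl fun i _ => ?_
  simp only [Fin.revPerm_apply, Fin.rev_rev, Fin.val_rev]
  split_ifs <;> first | omega | simp

end PartialSum

theorem measurePreserving_finAppend {α : Type*} [MeasurableSpace α] (μ : Measure α)
    [SigmaFinite μ] (a b : ℕ) :
    MeasurePreserving (fun p : (Fin a → α) × (Fin b → α) => Fin.append p.1 p.2)
      ((Measure.pi fun _ => μ).prod (Measure.pi fun _ => μ)) (Measure.pi fun _ => μ) := by
  have hmeas : Measurable fun p : (Fin a → α) × (Fin b → α) => Fin.append p.1 p.2 := by
    refine measurable_pi_lambda _ fun i => Fin.addCases (fun j => ?_) (fun j => ?_) i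
    · simp only [Fin.append_left]; fun_prop
    · simp only [Fin.append_right]; fun_prop
  refine ⟨hmeas, (Measure.pi_eq fun s hs => ?_).symm⟩
  have hpre : (fun p : (Fin a → α) × (Fin b → α) => Fin.append p.1 p.2) ⁻¹' Set.univ.pi s
      = Set.univ.pi (fun j => s (Fin.castAdd b j)) ×ˢ
        Set.univ.pi (fun j => s (Fin.natAdd a j)) := by
    ext
    simp [Fin.forall_fin_add]
  rw [Measure.map_apply hmeas (.univ_pi hs), hpre, Measure.prod_prod, Measure.pi_pi, Measure.pi_pi,
    Fin.prod_univ_add]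

theorem measurePreserving_comp_perm {ι α : Type*} [Fintype ι] [MeasurableSpace α] (μ : Measure α)
    [SigmaFinite μ] (σ : Equiv.Perm ι) :
    MeasurePreserving (fun x : ι → α => x ∘ σ) (Measure.pi fun _ => μ) (Measure.pi fun _ => μ) := by
  convert measurePreserving_piCongrLeft (fun _ => μ) σ.symm using 1
  funext x i
  simpa using (MeasurableEquiv.piCongrLeft_apply_apply (β := fun _ => α) σ.symm x (σ i)).symm

@[fun_prop]
theorem measurable_partialSum {m : ℕ} (k : ℕ) :
    Measurable fun x : Fin m → ℝ => partialSum x k := by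
  refine Finset.measurable_sum _ fun i _ => ?_
  split_ifs <;> fun_prop

def positiveSums (m : ℕ) : Set (Fin m → ℝ) := {x | ∀ k, 1 ≤ k → k ≤ m → 0 < partialSum x k}

def nonnegSums (m : ℕ) : Set (Fin m → ℝ) := {x | ∀ k, 1 ≤ k → k ≤ m → 0 ≤ partialSum x k}

def strictArgmax (n k : ℕ) : Set (Fin n → ℝ) :=
  {x | ∀ j ≤ n, j ≠ k → partialSum x j < partialSum x k}

theorem measurableSet_positiveSums (m : ℕ) : MeasurableSet (positiveSums m) := by
  unfold positiveSums; measurability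

theorem measurableSet_nonnegSums (m : ℕ) : MeasurableSet (nonnegSums m) := by
  unfold nonnegSums; measurability

theorem measurableSet_strictArgmax (n k : ℕ) : MeasurableSet (strictArgmax n k) := by
  unfold strictArgmax; measurability

section Ties

variable {μ : Measure ℝ} [IsProbabilityMeasure μ] [NullSingletonClass μ]

theorem measure_setOf_partialSum_eq {m k : ℕ} (hk : 1 ≤ k) (hkm : k ≤ m) (c : ℝ) :
    Measure.pi (fun _ : Fin m => μ) {x | partialSum x k = c} = 0 := by
  obtain ⟨r, rfl⟩ : ∃ r, m = 1 + r := ⟨m - 1, by omega⟩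
  obtain ⟨l, rfl⟩ : ∃ l, k = 1 + l := ⟨k - 1, by omega⟩
  have hpre : (fun p : (Fin 1 → ℝ) × (Fin r → ℝ) => Fin.append p.1 p.2) ⁻¹'
      {x | partialSum x (1 + l) = c} = {p | p.1 0 + partialSum p.2 l = c} := by
    ext p
    simp [partialSum_append_add, partialSum_of_le p.1 le_rfl]
  have hslice : ∀ z : Fin r → ℝ, Measure.pi (fun _ : Fin 1 => μ)
      ((·, z) ⁻¹' {p : (Fin 1 → ℝ) × (Fin r → ℝ) | p.1 0 + partialSum p.2 l = c}) = 0 := by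
    intro z
    have : (·, z) ⁻¹' {p : (Fin 1 → ℝ) × (Fin r → ℝ) | p.1 0 + partialSum p.2 l = c}
        = (fun u : Fin 1 → ℝ => u 0) ⁻¹' {c - partialSum z l} := by
      ext u
      simp [eq_sub_iff_add_eq]
    rw [this, (measurePreserving_eval _ 0).measure_preimage
      (measurableSet_singleton _).nullMeasurableSet, measure_singleton]
  -- Fubini: for fixed later coordinates, the first one has to hit a single point
  rw [← (measurePreserving_finAppend μ 1 r).measure_preimage
      (measurableSet_eq_fun (measurable_partialSum _) measurable_const).nullMeasurableSet,
    hpre, Measure.prod_apply_symm (measurableSet_eq_fun (by fun_prop) measurable_const)]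
  exact (lintegral_congr hslice).trans lintegral_zero

theorem measure_setOf_partialSum_eq_partialSum {n i j : ℕ} (hij : i < j) (hjn : j ≤ n) :
    Measure.pi (fun _ : Fin n => μ) {x | partialSum x j = partialSum x i} = 0 := by
  obtain ⟨r, rfl⟩ : ∃ r, n = i + r := ⟨n - i, by omega⟩
  obtain ⟨l, rfl⟩ : ∃ l, j = i + l := ⟨j - i, by omega⟩
  have hpre : (fun p : (Fin i → ℝ) × (Fin r → ℝ) => Fin.append p.1 p.2) ⁻¹'
      {x | partialSum x (i + l) = partialSum x i} = Set.univ ×ˢ {z | partialSum z l = 0} := by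
    ext p
    simp [partialSum_append_add, partialSum_append_of_le _ _ le_rfl]
  rw [← (measurePreserving_finAppend μ i r).measure_preimage
      (measurableSet_eq_fun (measurable_partialSum _) (measurable_partialSum _)).nullMeasurableSet,
    hpre, Measure.prod_prod, measure_setOf_partialSum_eq (by omega) (by omega), mul_zero]

theorem ae_partialSum_ne (n : ℕ) :
    ∀ᵐ x ∂Measure.pi (fun _ : Fin n => μ),
      ∀ i j, i < j → j ≤ n → partialSum x i ≠ partialSum x j := by
  refine ae_all_iff.2 fun i => ae_all_iff.2 fun j => ?_
  by_cases hij : i < j ∧ j ≤ n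
  · filter_upwards [measure_eq_zero_iff_ae_notMem.1
      (measure_setOf_partialSum_eq_partialSum (μ := μ) hij.1 hij.2)] with x hx _ _ h
    exact hx h.symm
  · exact .of_forall fun x h1 h2 => absurd ⟨h1, h2⟩ hij

theorem measure_nonnegSums (n : ℕ) :
    Measure.pi (fun _ : Fin n => μ) (nonnegSums n)
      = Measure.pi (fun _ : Fin n => μ) (positiveSums n) := by
  refine measure_congr ?_
  filter_upwards [ae_partialSum_ne (μ := μ) n] with x hx
  refine propext ⟨fun h k hk hkn => (h k hk hkn).lt_of_ne ?_, fun h k hk hkn => (h k hk hkn).le⟩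
  rw [← partialSum_zero x]
  exact hx 0 k (by omega) hkn

end Ties

section Argmax

variable {μ : Measure ℝ} [IsProbabilityMeasure μ]

theorem pairwiseDisjoint_strictArgmax (n : ℕ) :
    (range (n + 1) : Set ℕ).PairwiseDisjoint (strictArgmax n) := by
  intro k hk l hl hkl
  refine Set.disjoint_left.2 fun x hxk hxl => ?_
  simp only [coe_range, Set.mem_Iio] at hk hl
  exact (hxk l (by omega) hkl.symm).not_gt (hxl k (by omega) hkl)

theorem ae_mem_iUnion_strictArgmax [NullSingletonClass μ] (n : ℕ) :
    ∀ᵐ x ∂Measure.pi (fun _ : Fin n => μ), x ∈ ⋃ k ∈ range (n + 1), strictArgmax n k := by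
  filter_upwards [ae_partialSum_ne n] with x hx
  obtain ⟨k, hk, hmax⟩ := exists_max_image (range (n + 1)) (partialSum x) nonempty_range_add_one
  rw [mem_range] at hk
  refine Set.mem_biUnion (mem_range.2 hk) fun j hj hjk =>
    (hmax j (mem_range.2 (by omega))).lt_of_ne ?_
  rcases hjk.lt_or_gt with h | h
  · exact hx j k h (by omega)
  · exact (hx k j h hj).symm

theorem sum_measure_strictArgmax [NullSingletonClass μ] (n : ℕ) :
    ∑ k ∈ range (n + 1), Measure.pi (fun _ : Fin n => μ) (strictArgmax n k) = 1 := by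
  rw [← measure_biUnion_finset (pairwiseDisjoint_strictArgmax n)
      fun k _ => measurableSet_strictArgmax n k,
    (ae_mem_iff_measure_eq (Finset.measurableSet_biUnion _ fun k _ =>
      measurableSet_strictArgmax n k).nullMeasurableSet).1 (ae_mem_iUnion_strictArgmax n),
    measure_univ]

theorem append_preimage_strictArgmax (a b : ℕ) :
    (fun p : (Fin a → ℝ) × (Fin b → ℝ) => Fin.append p.1 p.2) ⁻¹' strictArgmax (a + b) a
      = strictArgmax a a ×ˢ (Neg.neg ⁻¹' positiveSums b) := by
  ext ⟨y, z⟩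
  simp only [Set.mem_preimage, Set.mem_prod, strictArgmax, positiveSums, Set.mem_ofPred_eq,
    partialSum_neg, Left.neg_pos_iff]
  constructor
  · intro h
    refine ⟨fun j hj hja => ?_, fun k hk hkb => ?_⟩
    · simpa [partialSum_append_of_le _ _ hj, partialSum_append_of_le _ _ le_rfl]
        using h j (by omega) hja
    · simpa [partialSum_append_add, partialSum_append_of_le _ _ le_rfl]
        using h (a + k) (by omega) (by omega)
  · rintro ⟨hy, hz⟩ j hj hja
    rw [partialSum_append_of_le _ _ le_rfl]
    rcases le_or_gt j a with hle | hlt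
    · rw [partialSum_append_of_le _ _ hle]
      exact hy j hle hja
    · obtain ⟨k, rfl⟩ : ∃ k, j = a + k := ⟨j - a, by omega⟩
      rw [partialSum_append_add]
      linarith [hz k (by omega) (by omega)]

theorem rev_preimage_positiveSums (a : ℕ) :
    (fun x : Fin a → ℝ => x ∘ Fin.revPerm) ⁻¹' positiveSums a = strictArgmax a a := by
  ext x
  simp only [Set.mem_preimage, positiveSums, strictArgmax, Set.mem_ofPred_eq, Function.comp_def,
    Fin.revPerm_apply]
  constructor
  · intro h j hj hja
    have := h (a - j) (by omega) (by omega)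
    rwa [partialSum_rev x (by omega), Nat.sub_sub_self hj, sub_pos] at this
  · intro h k hk hka
    rw [partialSum_rev x hka, sub_pos]
    exact h (a - k) (by omega) (by omega)

theorem measure_strictArgmax_add [μ.IsNegInvariant] (a b : ℕ) :
    Measure.pi (fun _ : Fin (a + b) => μ) (strictArgmax (a + b) a)
      = Measure.pi (fun _ : Fin a => μ) (positiveSums a)
        * Measure.pi (fun _ : Fin b => μ) (positiveSums b) := by
  rw [← (measurePreserving_finAppend μ a b).measure_preimage
      (measurableSet_strictArgmax _ _).nullMeasurableSet,
    append_preimage_strictArgmax, Measure.prod_prod, Measure.measure_preimage_neg,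
    ← rev_preimage_positiveSums, (measurePreserving_comp_perm μ Fin.revPerm).measure_preimage
      (measurableSet_positiveSums a).nullMeasurableSet]

theorem sum_range_measure_positiveSums_mul [NullSingletonClass μ] [μ.IsNegInvariant] (n : ℕ) :
    ∑ k ∈ range (n + 1), Measure.pi (fun _ : Fin k => μ) (positiveSums k)
      * Measure.pi (fun _ : Fin (n - k) => μ) (positiveSums (n - k)) = 1 := by
  rw [← sum_measure_strictArgmax (μ := μ) n]
  refine sum_congr rfl fun k hk => ?_
  obtain ⟨b, rfl⟩ := Nat.exists_eq_add_of_le (Nat.lt_succ_iff.1 (mem_range.1 hk))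
  rw [Nat.add_sub_cancel_left, measure_strictArgmax_add]

theorem measure_positiveSums [NullSingletonClass μ] [μ.IsNegInvariant] (n : ℕ) :
    Measure.pi (fun _ : Fin n => μ) (positiveSums n)
      = ENNReal.ofReal ((n.centralBinom : ℝ) / 4 ^ n) := by
  set p : ℕ → ℝ := fun k => (Measure.pi (fun _ : Fin k => μ) (positiveSums k)).toReal
  have hp0 : p 0 = 1 := by
    have : positiveSums 0 = Set.univ := Set.eq_univ_of_forall fun x k hk hk0 => by omega
    simp [p, this]
  have hp : ∀ n, ∑ k ∈ range (n + 1), p k * p (n - k) = 1 := fun n => by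
    simp only [p, ← ENNReal.toReal_mul, ← ENNReal.toReal_sum fun k _ =>
      ENNReal.mul_ne_top (measure_ne_top _ _) (measure_ne_top _ _),
      sum_range_measure_positiveSums_mul, ENNReal.toReal_one]
  have hpg := eq_of_sum_range_mul_self_eq (a := p) (b := fun k => (k.centralBinom : ℝ) / 4 ^ k)
    (by simp [hp0]) (by simp [hp0])
    (fun n => by rw [hp, sum_range_centralBinom_div_four_pow_mul])
  rw [← congrFun hpg n, ENNReal.ofReal_toReal (measure_ne_top _ _)]

end Argmax

/-- Sparre Andersen: for i.i.d. symmetric atomless random variables, the persistence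
probabilities `P(S_k > 0, 1 ≤ k ≤ n)` and `P(S_k ≥ 0, 1 ≤ k ≤ n)` are both equal to
`g(n) = (2n choose n) / 4^n`. -/
theorem sparre_andersen_iid_symmetric_atomless
    {Ω : Type*} [MeasurableSpace Ω] (P : Measure Ω) [IsProbabilityMeasure P]
    (n : ℕ) (hn : 1 ≤ n) (ξ : ℕ → Ω → ℝ)
    (hmeas : ∀ i, i < n → Measurable (ξ i))
    (hindep : iIndepFun (fun i : Fin n => ξ i) P)
    (hident : ∀ i : Fin n, Measure.map (ξ i) P = Measure.map (ξ 0) P)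
    (hsymm : Measure.map (ξ 0) P = Measure.map (fun ω => -(ξ 0 ω)) P)
    (hatomless : ∀ a : ℝ, P {ω | ξ 0 ω = a} = 0)
    (S : ℕ → Ω → ℝ) (hS : ∀ k ω, S k ω = ∑ i ∈ Finset.range k, ξ i ω) :
    P {ω | ∀ k, 1 ≤ k → k ≤ n → 0 < S k ω}
        = ENNReal.ofReal ((Nat.choose (2 * n) n : ℝ) / 4 ^ n) ∧
    P {ω | ∀ k, 1 ≤ k → k ≤ n → 0 ≤ S k ω}
        = ENNReal.ofReal ((Nat.choose (2 * n) n : ℝ) / 4 ^ n) := by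
  have hξ0 : Measurable (ξ 0) := hmeas 0 hn
  set μ := P.map (ξ 0)
  have : IsProbabilityMeasure μ := Measure.isProbabilityMeasure_map hξ0.aemeasurable
  have : μ.IsNegInvariant :=
    ⟨by rw [Measure.neg, Measure.map_map measurable_neg hξ0]; exact hsymm.symm⟩
  have : NullSingletonClass μ :=
    ⟨fun a => by rw [Measure.map_apply hξ0 (measurableSet_singleton a)]; exact hatomless a⟩
  set X : Ω → Fin n → ℝ := fun ω i => ξ i ω
  have hX : Measurable X := measurable_pi_lambda _ fun i => hmeas i i.isLt
  have hlaw : P.map X = Measure.pi fun _ => μ := by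
    rw [iIndepFun.map_fun_eq_pi_map (f := fun i : Fin n => ξ i)
      (fun i => (hmeas i i.isLt).aemeasurable) hindep]
    simp_rw [hident]
  have hS' : ∀ ω k, k ≤ n → S k ω = partialSum (X ω) k := fun ω k hk => by
    rw [hS, partialSum_eq_sum_range (ξ · ω) hk]
  have hpos : {ω | ∀ k, 1 ≤ k → k ≤ n → 0 < S k ω} = X ⁻¹' positiveSums n :=
    Set.ext fun ω => forall₃_congr fun k _ hk => by rw [hS' ω k hk]
  have hnonneg : {ω | ∀ k, 1 ≤ k → k ≤ n → 0 ≤ S k ω} = X ⁻¹' nonnegSums n :=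
    Set.ext fun ω => forall₃_congr fun k _ hk => by rw [hS' ω k hk]
  rw [hpos, hnonneg, ← Measure.map_apply hX (measurableSet_positiveSums n),
    ← Measure.map_apply hX (measurableSet_nonnegSums n), hlaw, measure_nonnegSums,
    measure_positiveSums, Nat.centralBinom_eq_two_mul_choose]
  exact ⟨rfl, rfl⟩
end

section
/- Let n ≥ 1 and let (ξ₁, …, ξₙ) be a random vector of real random variables that is exchangeable and sign-invariant. Then P(S_k > 0 for all 1 ≤ k ≤ n) ≥ P(ξ₁ > 0) · g(n−1). -/
/-!
Fix `y ∈ ℝⁿ`, let `π` range over the signed permutations of its coordinates and call the partial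
sums `S_k` of `π • y` its walk. Let `minAt y b` be the set of `π` whose walk attains its minimum over
`[b, n]` at `b`, and `minAtAbove y b j` the set of those whose walk attains its minimum over
`[j, n]` at `j` and satisfies `S_b ≤ S_j`. Negating the signs on the block `[b, j)` shows
`#minAt y j ≤ 2 #minAtAbove y b j`. Rotating the block `[b, j)` so that it starts at the first
minimum of the walk there maps the pairs `(j, π)` with `b < j ≤ n`, `π ∈ minAtAbove y b j`
injectively into `(b, n] × minAt y b`. Since `∑_{i < L} g(i) = 2 L g(L)`, induction on `n - b`
gives `#minAt y b ≥ g(n - b) · #{π}`; averaging over the group, under any law invariant under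
signed permutations the walk stays nonnegative with probability at least `g(n)`. Apply this to
the last `n - 1` coordinates under the law restricted to `{ξ₁ > 0}`: a positive first step
followed by a nonnegative walk keeps every `S_k` positive.
-/

open Finset

namespace Persistence

section PartialSums

variable (x : ℕ → ℝ) {a b j k : ℕ}

def psum (k : ℕ) : ℝ := ∑ i ∈ range k, x i

lemma psum_eq_add_sum_Ico (h : a ≤ k) : psum x k = psum x a + ∑ i ∈ Ico a k, x i :=
  (sum_range_add_sum_Ico x h).symm

variable {x} in
lemma psum_congr {x' : ℕ → ℝ} (h : ∀ i < k, x i = x' i) : psum x k = psum x' k :=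
  sum_congr rfl fun i hi => h i (mem_range.1 hi)

def negIco (b j : ℕ) (x : ℕ → ℝ) (i : ℕ) : ℝ := if i ∈ Ico b j then -x i else x i

lemma psum_negIco_of_le (hk : k ≤ b) : psum (negIco b j x) k = psum x k :=
  psum_congr fun i hi => if_neg fun h => by simp at h; omega

lemma psum_negIco (hbj : b ≤ j) (hjk : j ≤ k) :
    psum (negIco b j x) k = psum x k - 2 * (psum x j - psum x b) := by
  have hsplit : ∀ i, negIco b j x i = x i - 2 * if i ∈ Ico b j then x i else 0 := by
    intro i; unfold negIco; split_ifs <;> ring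
  have hIco : range k ∩ Ico b j = Ico b j :=
    inter_eq_right.2 fun i hi => by simp at hi ⊢; omega
  simp only [psum, hsplit, sum_sub_distrib, ← mul_sum, sum_ite_mem, hIco, sum_Ico_eq_sub _ hbj]

/-- The rotation of the block `[b, j)` that brings position `a` to the front. -/
def rotIco (b a j i : ℕ) : ℕ :=
  if b ≤ i ∧ i < j then (if i + a < j + b then i + a - b else i + a - j) else i

lemma rotIco_rotIco (hba : b ≤ a) (haj : a ≤ j) (i : ℕ) :
    rotIco b (b + j - a) j (rotIco b a j i) = i := by
  unfold rotIco; split_ifs <;> omega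

lemma rotIco_lt_iff {n i : ℕ} (haj : a ≤ j) (hjn : j ≤ n) : rotIco b a j i < n ↔ i < n := by
  unfold rotIco; split_ifs <;> omega

lemma rotIco_of_notMem {i : ℕ} (hi : i < b ∨ j ≤ i) : rotIco b a j i = i :=
  if_neg (by omega)

lemma psum_comp_rotIco_of_le (hk : k ≤ b) : psum (x ∘ rotIco b a j) k = psum x k :=
  psum_congr fun i hi => congrArg x (rotIco_of_notMem (by omega))

/- Inside the block, the rotated walk first replays the original one on `[a, j)`, then on
`[b, a)`. -/
lemma psum_comp_rotIco_before_wrap (hba : b ≤ a) (hbk : b ≤ k) (hk : k + a ≤ j + b) :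
    psum (x ∘ rotIco b a j) k = psum x b + (psum x (k + a - b) - psum x a) := by
  have hshift : ∑ i ∈ Ico b k, (x ∘ rotIco b a j) i = ∑ i ∈ Ico a (k + a - b), x i := by
    rw [show Ico a (k + a - b) = Ico (b + (a - b)) (k + (a - b)) by congr 1 <;> omega,
      ← sum_Ico_add']
    refine sum_congr rfl fun i hi => ?_
    simp only [mem_Ico] at hi
    simp only [Function.comp, rotIco, if_pos (show b ≤ i ∧ i < j by omega),
      if_pos (show i + a < j + b by omega)]
    congr 1; omega
  rw [psum_eq_add_sum_Ico _ hbk, psum_comp_rotIco_of_le x le_rfl, hshift,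
    sum_Ico_eq_sub _ (by omega)]
  rfl

lemma psum_comp_rotIco_after_wrap (hba : b ≤ a) (haj : a ≤ j) (hk : j + b ≤ k + a)
    (hkj : k ≤ j) : psum (x ∘ rotIco b a j) k = psum x j - psum x a + psum x (k + a - j) := by
  have hshift :
      ∑ i ∈ Ico (j + b - a) k, (x ∘ rotIco b a j) i = ∑ i ∈ Ico b (k + a - j), x i := by
    rw [show Ico (j + b - a) k = Ico (b + (j - a)) (k + a - j + (j - a)) by congr 1 <;> omega,
      ← sum_Ico_add']
    refine sum_congr rfl fun i hi => ?_
    simp only [mem_Ico] at hi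
    simp only [Function.comp, rotIco, if_pos (show b ≤ i + (j - a) ∧ i + (j - a) < j by omega),
      if_neg (show ¬ i + (j - a) + a < j + b by omega)]
    congr 1; omega
  rw [psum_eq_add_sum_Ico _ (show j + b - a ≤ k by omega),
    psum_comp_rotIco_before_wrap x hba (by omega) (by omega), hshift,
    sum_Ico_eq_sub _ (by omega), show j + b - a + a - b = j by omega]
  simp only [psum]; ring

lemma psum_comp_rotIco_of_ge (hba : b ≤ a) (haj : a ≤ j) (hjk : j ≤ k) :
    psum (x ∘ rotIco b a j) k = psum x k := by
  have hfix : ∑ i ∈ Ico j k, (x ∘ rotIco b a j) i = ∑ i ∈ Ico j k, x i :=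
    sum_congr rfl fun i hi => congrArg x (rotIco_of_notMem (by simp at hi; omega))
  rw [psum_eq_add_sum_Ico _ hjk, psum_comp_rotIco_after_wrap x hba haj (by omega) le_rfl,
    hfix, psum_eq_add_sum_Ico x hjk, show j + a - j = a by omega]
  ring

end PartialSums

section FirstArgmin

variable {α : Type*} [LinearOrder α] (f : ℕ → α) {b j : ℕ}

lemma exists_le_forall_Ico (b j : ℕ) : ∃ a, b ≤ a ∧ ∀ i ∈ Ico b j, f a ≤ f i := by
  rcases (Ico b j).eq_empty_or_nonempty with h | h
  · exact ⟨b, le_rfl, by simp [h]⟩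
  · obtain ⟨a, ha, hmin⟩ := exists_min_image _ f h
    exact ⟨a, (mem_Ico.1 ha).1, hmin⟩

open Classical in
/-- The first position from `b` on where `f` is at most all of its values on `[b, j)`. -/
noncomputable def firstArgmin (b j : ℕ) : ℕ := Nat.find (exists_le_forall_Ico f b j)

lemma le_firstArgmin : b ≤ firstArgmin f b j := by
  classical exact (Nat.find_spec (exists_le_forall_Ico f b j)).1

lemma firstArgmin_le_apply {i : ℕ} (hi : i ∈ Ico b j) : f (firstArgmin f b j) ≤ f i := by
  classical exact (Nat.find_spec (exists_le_forall_Ico f b j)).2 i hi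

lemma firstArgmin_lt (hbj : b < j) : firstArgmin f b j < j := by
  classical
  obtain ⟨a, ha, hmin⟩ := exists_min_image (Ico b j) f (nonempty_Ico.2 hbj)
  exact (Nat.find_min' _ ⟨(mem_Ico.1 ha).1, hmin⟩).trans_lt (mem_Ico.1 ha).2

lemma apply_firstArgmin_lt {i : ℕ} (hi : i ∈ Ico b (firstArgmin f b j)) :
    f (firstArgmin f b j) < f i := by
  classical
  obtain ⟨hbi, hiA⟩ := mem_Ico.1 hi
  by_contra! hle
  exact (Nat.find_min' _ ⟨hbi, fun i' hi' => hle.trans (firstArgmin_le_apply f hi')⟩).not_gt hiA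

end FirstArgmin

section Rotation

variable {x : ℕ → ℝ} {b j n : ℕ}

lemma isMinOn_psum_comp_rotIco (hbj : b < j) (hstep : psum x b ≤ psum x j)
    (hmin : IsMinOn (psum x) (Set.Icc j n) j) :
    IsMinOn (psum (x ∘ rotIco b (firstArgmin (psum x) b j) j)) (Set.Icc b n) b := by
  set A := firstArgmin (psum x) b j
  have hbA : b ≤ A := le_firstArgmin _
  have hAj : A < j := firstArgmin_lt _ hbj
  have hAmin : ∀ i ∈ Icc b j, psum x A ≤ psum x i := fun i hi => by
    rcases (mem_Icc.1 hi).2.lt_or_eq with hij | rfl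
    · exact firstArgmin_le_apply _ (mem_Ico.2 ⟨(mem_Icc.1 hi).1, hij⟩)
    · exact (firstArgmin_le_apply _ (mem_Ico.2 ⟨le_rfl, hbj⟩)).trans hstep
  rw [isMinOn_iff]
  rintro k ⟨hbk, hkn⟩
  rw [psum_comp_rotIco_of_le x le_rfl]
  rcases le_or_gt (k + A) (j + b) with hk | hk
  · rw [psum_comp_rotIco_before_wrap x hbA hbk hk]
    linarith [hAmin (k + A - b) (mem_Icc.2 ⟨by omega, by omega⟩)]
  rcases le_or_gt k j with hkj | hjk
  · rw [psum_comp_rotIco_after_wrap x hbA hAj.le hk.le hkj]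
    linarith [hAmin (k + A - j) (mem_Icc.2 ⟨by omega, by omega⟩)]
  · rw [psum_comp_rotIco_of_ge x hbA hAj.le hjk.le]
    exact hstep.trans (hmin ⟨hjk.le, hkn⟩)

lemma psum_comp_rotIco_lt (hbj : b < j) {i : ℕ}
    (hi : i ∈ Ico (j + b - firstArgmin (psum x) b j) j) :
    psum (x ∘ rotIco b (firstArgmin (psum x) b j) j) j
      < psum (x ∘ rotIco b (firstArgmin (psum x) b j) j) i := by
  set A := firstArgmin (psum x) b j
  have hbA : b ≤ A := le_firstArgmin _
  have hAj : A < j := firstArgmin_lt _ hbj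
  obtain ⟨hi₁, hi₂⟩ := mem_Ico.1 hi
  rw [psum_comp_rotIco_of_ge x hbA hAj.le le_rfl,
    psum_comp_rotIco_after_wrap x hbA hAj.le (by omega) hi₂.le]
  linarith [apply_firstArgmin_lt (psum x)
    (mem_Ico.2 (show b ≤ i + A - j ∧ i + A - j < A by omega))]

end Rotation

def extendZero {n : ℕ} (v : Fin n → ℝ) (i : ℕ) : ℝ :=
  if h : i < n then v ⟨i, h⟩ else 0

abbrev SignedPerm (n : ℕ) := Equiv.Perm (Fin n) × (Fin n → Bool)

namespace SignedPerm

variable {n : ℕ}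

/-- `(σ, s)` acts by `v ↦ (i ↦ ± v (σ i))`, with sign `-` exactly where `s i = true`. -/
def act (g : SignedPerm n) (v : Fin n → ℝ) : Fin n → ℝ :=
  fun i => (if g.2 i then -1 else 1) * v (g.1 i)

def permute (g : SignedPerm n) (ρ : Equiv.Perm (Fin n)) : SignedPerm n :=
  (ρ.trans g.1, g.2 ∘ ρ)

lemma act_permute (g : SignedPerm n) (ρ : Equiv.Perm (Fin n)) (v : Fin n → ℝ) :
    (g.permute ρ).act v = g.act v ∘ ρ := rfl

lemma permute_injective (ρ : Equiv.Perm (Fin n)) :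
    Function.Injective fun g : SignedPerm n => g.permute ρ := by
  rintro ⟨σ₁, s₁⟩ ⟨σ₂, s₂⟩ h
  simp only [permute, Prod.mk.injEq] at h
  refine Prod.ext ?_ (ρ.surjective.injective_comp_right h.2)
  simpa [← Equiv.trans_assoc] using congrArg ρ.symm.trans h.1

def flipSigns (b j : ℕ) (g : SignedPerm n) : SignedPerm n :=
  (g.1, fun i => xor (decide ((i : ℕ) ∈ Ico b j)) (g.2 i))

lemma flipSigns_involutive (b j : ℕ) : Function.Involutive (flipSigns (n := n) b j) := by
  intro g; simp [flipSigns]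

lemma extendZero_act_flipSigns (b j : ℕ) (g : SignedPerm n) (v : Fin n → ℝ) :
    extendZero ((g.flipSigns b j).act v) = negIco b j (extendZero (g.act v)) := by
  funext i
  unfold extendZero negIco act flipSigns
  split_ifs <;> simp_all

end SignedPerm

/-- `rotIco b a j` as a permutation of `Fin n`; the identity unless `b ≤ a ≤ j ≤ n`. -/
def rotIcoPerm (n b a j : ℕ) : Equiv.Perm (Fin n) :=
  if h : b ≤ a ∧ a ≤ j ∧ j ≤ n then
    { toFun := fun i => ⟨rotIco b a j i, (rotIco_lt_iff h.2.1 h.2.2).2 i.2⟩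
      invFun := fun i => ⟨rotIco b (b + j - a) j i, (rotIco_lt_iff (by omega) h.2.2).2 i.2⟩
      left_inv := fun i => Fin.ext (rotIco_rotIco h.1 h.2.1 i)
      right_inv := fun i => Fin.ext <| by
        simpa [show b + j - (b + j - a) = a by omega] using
          rotIco_rotIco (b := b) (a := b + j - a) (j := j) (by omega) (by omega) i }
  else 1

lemma extendZero_comp_rotIcoPerm {n b a j : ℕ} (hba : b ≤ a) (haj : a ≤ j) (hjn : j ≤ n)
    (v : Fin n → ℝ) :
    extendZero (v ∘ rotIcoPerm n b a j) = extendZero v ∘ rotIco b a j := by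
  funext i
  by_cases hi : i < n
  · simp [extendZero, rotIcoPerm, hba, haj, hjn, hi, (rotIco_lt_iff haj hjn).2 hi]
  · simp [extendZero, hi, rotIco_of_notMem (show i < b ∨ j ≤ i by omega)]

noncomputable def centralBinomRatio (m : ℕ) : ℝ := m.centralBinom / 4 ^ m

lemma centralBinomRatio_nonneg (m : ℕ) : 0 ≤ centralBinomRatio m := by
  unfold centralBinomRatio; positivity

lemma sum_range_centralBinomRatio (L : ℕ) :
    ∑ i ∈ range L, centralBinomRatio i = 2 * L * centralBinomRatio L := by
  induction L with
  | zero => simp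
  | succ L ih =>
    have hrec : ((L + 1 : ℕ) : ℝ) * (L + 1).centralBinom
        = 2 * (2 * L + 1) * L.centralBinom := by
      exact_mod_cast Nat.succ_mul_centralBinom_succ L
    rw [sum_range_succ, ih, centralBinomRatio, centralBinomRatio, pow_succ]
    push_cast at hrec ⊢
    field_simp
    linarith

lemma sum_Ioc_centralBinomRatio_sub (b n : ℕ) :
    ∑ j ∈ Ioc b n, centralBinomRatio (n - j)
      = ∑ s ∈ range (n - b), centralBinomRatio s := by
  refine sum_nbij' (n - ·) (n - ·) ?_ ?_ ?_ ?_ ?_ <;> intro i hi <;> simp at hi ⊢ <;> omega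

section Counting

variable {n : ℕ} (y : Fin n → ℝ) {b j : ℕ}

def walk (g : SignedPerm n) : ℕ → ℝ := psum (extendZero (g.act y))

open Classical in
noncomputable def minAt (b : ℕ) : Finset (SignedPerm n) :=
  {g | IsMinOn (walk y g) (Set.Icc b n) b}

open Classical in
noncomputable def minAtAbove (b j : ℕ) : Finset (SignedPerm n) :=
  {g | walk y g b ≤ walk y g j ∧ IsMinOn (walk y g) (Set.Icc j n) j}

lemma minAt_self : minAt y n = univ := by
  ext g
  simp only [minAt, mem_filter, mem_univ, true_and, iff_true, isMinOn_iff]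
  rintro k ⟨hnk, hkn⟩
  rw [le_antisymm hkn hnk]

lemma card_minAt_le_two_mul (hbj : b ≤ j) : #(minAt y j) ≤ 2 * #(minAtAbove y b j) := by
  classical
  have hsplit := card_filter_add_card_filter_not (s := minAt y j)
    fun g => walk y g b ≤ walk y g j
  have habove : (minAt y j).filter (fun g => walk y g b ≤ walk y g j) = minAtAbove y b j := by
    ext g; simp [minAt, minAtAbove, and_comm]
  have hflip : #((minAt y j).filter fun g => ¬ walk y g b ≤ walk y g j)
      ≤ #(minAtAbove y b j) := by
    refine card_le_card_of_injOn (SignedPerm.flipSigns b j) (fun g hg => ?_)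
      (SignedPerm.flipSigns_involutive b j).injective.injOn
    simp only [minAt, minAtAbove, coe_filter, mem_filter, mem_univ, true_and,
      Set.mem_ofPred_eq, isMinOn_iff] at hg ⊢
    have hwalk : ∀ k, j ≤ k →
        walk y (g.flipSigns b j) k = walk y g k - 2 * (walk y g j - walk y g b) := fun k hk => by
      simp only [walk, SignedPerm.extendZero_act_flipSigns, psum_negIco _ hbj hk]
    have hwalk_b : walk y (g.flipSigns b j) b = walk y g b := by
      simp only [walk, SignedPerm.extendZero_act_flipSigns, psum_negIco_of_le _ le_rfl]
    refine ⟨by rw [hwalk_b, hwalk j le_rfl]; linarith [hg.2], fun k hk => ?_⟩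
    rw [hwalk k hk.1, hwalk j le_rfl]
    linarith [hg.1 k hk]
  rw [habove] at hsplit
  omega

noncomputable def rotateAtMin (b j : ℕ) (g : SignedPerm n) : SignedPerm n :=
  g.permute (rotIcoPerm n b (firstArgmin (walk y g) b j) j)

variable {y} {g : SignedPerm n}

lemma walk_rotateAtMin (hbj : b < j) (hjn : j ≤ n) :
    walk y (rotateAtMin y b j g)
      = psum (extendZero (g.act y) ∘ rotIco b (firstArgmin (walk y g) b j) j) := by
  rw [walk, rotateAtMin, SignedPerm.act_permute,
    extendZero_comp_rotIcoPerm (le_firstArgmin _) (firstArgmin_lt _ hbj).le hjn]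

lemma walk_rotateAtMin_of_ge (hbj : b < j) (hjn : j ≤ n) {k : ℕ} (hjk : j ≤ k) :
    walk y (rotateAtMin y b j g) k = walk y g k := by
  rw [walk_rotateAtMin hbj hjn,
    psum_comp_rotIco_of_ge _ (le_firstArgmin _) (firstArgmin_lt _ hbj).le hjk]
  rfl

lemma walk_rotateAtMin_lt (hbj : b < j) (hjn : j ≤ n) {i : ℕ}
    (hi : i ∈ Ico (j + b - firstArgmin (walk y g) b j) j) :
    walk y (rotateAtMin y b j g) j < walk y (rotateAtMin y b j g) i := by
  rw [walk_rotateAtMin hbj hjn]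
  exact psum_comp_rotIco_lt hbj hi

lemma rotateAtMin_mem_minAt (hbj : b < j) (hjn : j ≤ n) (hg : g ∈ minAtAbove y b j) :
    rotateAtMin y b j g ∈ minAt y b := by
  simp only [minAtAbove, minAt, mem_filter, mem_univ, true_and] at hg ⊢
  rw [walk_rotateAtMin hbj hjn]
  exact isMinOn_psum_comp_rotIco hbj hg.1 hg.2

/-- The cut `j` is recovered from the rotated walk as the first point where it attains its
minimum over `[j + b - firstArgmin (walk y g) b j, n]`. -/
lemma not_lt_of_rotateAtMin_eq {j₁ j₂ : ℕ} {g₁ g₂ : SignedPerm n} (hbj₁ : b < j₁)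
    (hbj₂ : b < j₂) (hj₂n : j₂ ≤ n) (hg₁ : g₁ ∈ minAtAbove y b j₁)
    (hcut : j₁ + b - firstArgmin (walk y g₁) b j₁
      = j₂ + b - firstArgmin (walk y g₂) b j₂)
    (hrot : rotateAtMin y b j₁ g₁ = rotateAtMin y b j₂ g₂) : ¬ j₁ < j₂ := by
  intro hlt
  have hbA := le_firstArgmin (walk y g₁) (b := b) (j := j₁)
  have hstrict := walk_rotateAtMin_lt hbj₂ hj₂n (y := y) (g := g₂) (i := j₁)
    (mem_Ico.2 ⟨by omega, hlt⟩)
  rw [← hrot, walk_rotateAtMin_of_ge hbj₁ (by omega) hlt.le,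
    walk_rotateAtMin_of_ge hbj₁ (by omega) le_rfl] at hstrict
  simp only [minAtAbove, mem_filter, mem_univ, true_and, isMinOn_iff] at hg₁
  linarith [hg₁.2 j₂ ⟨hlt.le, hj₂n⟩]

variable (y)

lemma sum_card_minAtAbove_le (b : ℕ) :
    ∑ j ∈ Ioc b n, #(minAtAbove y b j) ≤ (n - b) * #(minAt y b) := by
  rw [← card_sigma, ← Nat.card_Ioc b n, ← card_product]
  refine card_le_card_of_injOn
    (fun p => (p.1 + b - firstArgmin (walk y p.2) b p.1, rotateAtMin y b p.1 p.2)) ?_ ?_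
  · rintro ⟨j, g⟩ hp
    simp only [coe_sigma, Set.mem_sigma_iff, mem_coe, mem_Ioc] at hp
    have := le_firstArgmin (walk y g) (b := b) (j := j)
    have := firstArgmin_lt (walk y g) hp.1.1
    simp only [coe_product, Set.mem_prod, mem_coe, mem_Ioc]
    exact ⟨⟨by omega, by omega⟩, rotateAtMin_mem_minAt hp.1.1 hp.1.2 hp.2⟩
  · rintro ⟨j₁, g₁⟩ hp₁ ⟨j₂, g₂⟩ hp₂ he
    simp only [coe_sigma, Set.mem_sigma_iff, mem_coe, mem_Ioc] at hp₁ hp₂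
    simp only [Prod.mk.injEq] at he
    obtain rfl : j₁ = j₂ := le_antisymm
      (not_lt.1 <| not_lt_of_rotateAtMin_eq hp₂.1.1 hp₁.1.1 hp₁.1.2 hp₂.2 he.1.symm he.2.symm)
      (not_lt.1 <| not_lt_of_rotateAtMin_eq hp₁.1.1 hp₂.1.1 hp₂.1.2 hp₁.2 he.1 he.2)
    have hA : firstArgmin (walk y g₁) b j₁ = firstArgmin (walk y g₂) b j₁ := by
      have := firstArgmin_lt (walk y g₁) hp₁.1.1
      have := firstArgmin_lt (walk y g₂) hp₁.1.1
      have := le_firstArgmin (walk y g₁) (b := b) (j := j₁)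
      omega
    have hg := he.2
    rw [rotateAtMin, rotateAtMin, hA] at hg
    rw [SignedPerm.permute_injective _ hg]

theorem centralBinomRatio_mul_card_le_card_minAt {t : ℕ} (htn : t ≤ n) :
    centralBinomRatio t * Fintype.card (SignedPerm n) ≤ #(minAt y (n - t)) := by
  induction t using Nat.strong_induction_on with
  | _ t ih =>
  rcases Nat.eq_zero_or_pos t with rfl | ht
  · simp [centralBinomRatio, minAt_self]
  set b := n - t
  have hstep : ∀ j ∈ Ioc b n, centralBinomRatio (n - j) * Fintype.card (SignedPerm n)
      ≤ 2 * #(minAtAbove y b j) := fun j hj => by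
    obtain ⟨hbj, hjn⟩ := mem_Ioc.1 hj
    refine (ih (n - j) (by omega) (by omega)).trans ?_
    rw [show n - (n - j) = j by omega]
    exact_mod_cast card_minAt_le_two_mul y hbj.le
  have hrotate : (∑ j ∈ Ioc b n, #(minAtAbove y b j) : ℝ) ≤ t * #(minAt y b) := by
    rw [show t = n - b by omega]
    exact_mod_cast sum_card_minAtAbove_le y b
  refine le_of_mul_le_mul_left ?_ (show (0 : ℝ) < 2 * t by positivity)
  calc 2 * t * (centralBinomRatio t * Fintype.card (SignedPerm n))
      = ∑ j ∈ Ioc b n, centralBinomRatio (n - j) * Fintype.card (SignedPerm n) := by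
        rw [← sum_mul, sum_Ioc_centralBinomRatio_sub, show n - b = t by omega,
          sum_range_centralBinomRatio]
        ring
    _ ≤ ∑ j ∈ Ioc b n, 2 * (#(minAtAbove y b j) : ℝ) := sum_le_sum hstep
    _ ≤ 2 * t * #(minAt y b) := by rw [← mul_sum]; linarith

end Counting

section Measure

open MeasureTheory
open scoped ENNReal

theorem lintegral_card_filter_mem {α ι : Type*} [MeasurableSpace α] [Fintype ι]
    (μ : Measure α) {T : ι → α → α} (hT : ∀ i, Measurable (T i)) {s : Set α}
    (hs : MeasurableSet s) [∀ a, DecidablePred fun i => T i a ∈ s] :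
    ∫⁻ a, (#{i | T i a ∈ s} : ℝ≥0∞) ∂μ = ∑ i, μ (T i ⁻¹' s) := by
  have hind : ∀ i a,
      (if T i a ∈ s then (1 : ℝ≥0∞) else 0) = (T i ⁻¹' s).indicator 1 a :=
    fun i a => by by_cases h : T i a ∈ s <;> simp [h]
  simp only [card_filter, Nat.cast_sum, Nat.cast_ite, Nat.cast_one, Nat.cast_zero, hind]
  rw [lintegral_finsetSum _ fun i _ => measurable_one.indicator (hT i hs)]
  simp only [lintegral_indicator_one (hT _ hs)]

lemma measurable_psum_extendZero {n : ℕ} (k : ℕ) :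
    Measurable fun v : Fin n → ℝ => psum (extendZero v) k := by
  refine Finset.measurable_sum _ fun i _ => ?_
  by_cases hi : i < n
  · simpa [extendZero, hi] using measurable_pi_apply _
  · simp [extendZero, hi]

lemma SignedPerm.measurable_act {n : ℕ} (g : SignedPerm n) : Measurable g.act :=
  measurable_pi_lambda _ fun _ => (measurable_pi_apply _).const_mul _

def nonnegWalks (m : ℕ) : Set (Fin m → ℝ) := {v | ∀ k ≤ m, 0 ≤ psum (extendZero v) k}

lemma measurableSet_nonnegWalks (m : ℕ) : MeasurableSet (nonnegWalks m) := by
  simp only [nonnegWalks, Set.ofPred_forall]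
  exact .iInter fun k => .iInter fun _ =>
    measurableSet_le measurable_const (measurable_psum_extendZero k)

lemma act_mem_nonnegWalks_iff {m : ℕ} (g : SignedPerm m) (v : Fin m → ℝ) :
    g.act v ∈ nonnegWalks m ↔ g ∈ minAt v 0 := by
  simp [nonnegWalks, minAt, isMinOn_iff, walk, psum]

theorem ofReal_centralBinomRatio_mul_le_nonnegWalks {m : ℕ} (ν : Measure (Fin m → ℝ))
    (hν : ∀ g : SignedPerm m, ν.map g.act = ν) :
    ENNReal.ofReal (centralBinomRatio m) * ν Set.univ ≤ ν (nonnegWalks m) := by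
  classical
  set c : ℕ := Fintype.card (SignedPerm m)
  have hcount : ∀ v, ENNReal.ofReal (centralBinomRatio m) * c
      ≤ #{g : SignedPerm m | g.act v ∈ nonnegWalks m} := fun v => by
    have hreal := centralBinomRatio_mul_card_le_card_minAt v le_rfl
    rw [Nat.sub_self] at hreal
    have hset : ({g | g.act v ∈ nonnegWalks m} : Finset (SignedPerm m)) = minAt v 0 := by
      ext g; simp [act_mem_nonnegWalks_iff]
    rw [hset, ← ENNReal.ofReal_natCast, ← ENNReal.ofReal_natCast,
      ← ENNReal.ofReal_mul (centralBinomRatio_nonneg _)]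
    exact ENNReal.ofReal_le_ofReal hreal
  have hinv : ∀ g : SignedPerm m, ν (g.act ⁻¹' nonnegWalks m) = ν (nonnegWalks m) :=
    fun g => by rw [← Measure.map_apply g.measurable_act (measurableSet_nonnegWalks m), hν]
  rw [← ENNReal.mul_le_mul_iff_right (a := c) (Nat.cast_ne_zero.2 Fintype.card_ne_zero)
    (ENNReal.natCast_ne_top _)]
  calc (c : ℝ≥0∞) * (ENNReal.ofReal (centralBinomRatio m) * ν Set.univ)
      = ∫⁻ _, ENNReal.ofReal (centralBinomRatio m) * c ∂ν := by rw [lintegral_const]; ring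
    _ ≤ ∫⁻ v, (#{g : SignedPerm m | g.act v ∈ nonnegWalks m} : ℝ≥0∞) ∂ν :=
      lintegral_mono hcount
    _ = ∑ g : SignedPerm m, ν (g.act ⁻¹' nonnegWalks m) :=
      lintegral_card_filter_mem ν (fun g => g.measurable_act) (measurableSet_nonnegWalks m)
    _ = c * ν (nonnegWalks m) := by simp only [hinv, sum_const, card_univ, nsmul_eq_mul, c]

lemma psum_extendZero_succ {m : ℕ} (v : Fin (m + 1) → ℝ) (k : ℕ) :
    psum (extendZero v) (k + 1) = v 0 + psum (extendZero (Fin.tail v)) k := by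
  rw [psum, sum_range_succ', add_comm]
  congr 1
  refine sum_congr rfl fun i _ => ?_
  by_cases hi : i < m
  · simp [extendZero, hi, Fin.tail, Fin.succ]
  · simp [extendZero, hi]

lemma psum_extendZero_of_le {n k : ℕ} (f : ℕ → ℝ) (hk : k ≤ n) :
    psum (extendZero fun i : Fin n => f i) k = ∑ i ∈ range k, f i :=
  psum_congr fun i hi => by simp [extendZero, show i < n by omega]

namespace SignedPerm

variable {m : ℕ}

/-- The extension to `Fin (m + 1)` that fixes `0` with sign `+`. -/
def cons (g : SignedPerm m) : SignedPerm (m + 1) :=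
  (Equiv.Perm.decomposeFin.symm (0, g.1), Fin.cons false g.2)

lemma act_cons_zero (g : SignedPerm m) (v : Fin (m + 1) → ℝ) : g.cons.act v 0 = v 0 := by
  simp [act, cons]

lemma tail_act_cons (g : SignedPerm m) (v : Fin (m + 1) → ℝ) :
    Fin.tail (g.cons.act v) = g.act (Fin.tail v) := by
  funext i
  simp [act, cons, Fin.tail, Equiv.Perm.decomposeFin_symm_apply_succ]

end SignedPerm

lemma measurable_tail {m : ℕ} : Measurable (Fin.tail : (Fin (m + 1) → ℝ) → Fin m → ℝ) :=
  measurable_pi_lambda _ fun _ => measurable_pi_apply _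

theorem map_act_map_tail_restrict {m : ℕ} {μ : Measure (Fin (m + 1) → ℝ)}
    (hμ : ∀ g : SignedPerm (m + 1), μ.map g.act = μ) (g : SignedPerm m) :
    ((μ.restrict {v | 0 < v 0}).map Fin.tail).map g.act
      = (μ.restrict {v | 0 < v 0}).map Fin.tail := by
  have hA : MeasurableSet {v : Fin (m + 1) → ℝ | 0 < v 0} :=
    measurableSet_lt measurable_const (measurable_pi_apply 0)
  have hpre : g.cons.act ⁻¹' {v | 0 < v 0} = {v | 0 < v 0} := by
    ext v; simp [SignedPerm.act_cons_zero]
  have hrestrict : (μ.restrict {v | 0 < v 0}).map g.cons.act = μ.restrict {v | 0 < v 0} := by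
    conv_lhs => rw [← hpre]
    rw [← Measure.restrict_map g.cons.measurable_act hA, hμ]
  rw [Measure.map_map g.measurable_act measurable_tail,
    show g.act ∘ Fin.tail = Fin.tail ∘ g.cons.act from funext fun v => (g.tail_act_cons v).symm,
    ← Measure.map_map measurable_tail g.cons.measurable_act, hrestrict]

theorem map_act_map_eq {Ω : Type*} [MeasurableSpace Ω] {P : Measure Ω} {n : ℕ}
    {X : Ω → Fin n → ℝ} (hX : Measurable X)
    (hperm : ∀ σ : Equiv.Perm (Fin n), P.map (fun ω i => X ω (σ i)) = P.map X)
    (hsign : ∀ ε : Fin n → ℝ, (∀ i, ε i = 1 ∨ ε i = -1) →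
      P.map (fun ω i => ε i * X ω i) = P.map X)
    (g : SignedPerm n) : (P.map X).map g.act = P.map X := by
  set ε : Fin n → ℝ := fun i => if g.2 i then -1 else 1
  have hσ : Measurable fun ω i => X ω (g.1 i) :=
    measurable_pi_lambda _ fun _ => (measurable_pi_apply _).comp hX
  have hε : Measurable fun (v : Fin n → ℝ) i => ε i * v i :=
    measurable_pi_lambda _ fun _ => (measurable_pi_apply _).const_mul _
  calc (P.map X).map g.act = (P.map fun ω i => X ω (g.1 i)).map fun v i => ε i * v i := by
        rw [Measure.map_map g.measurable_act hX, Measure.map_map hε hσ]; rfl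
    _ = P.map X := by
        rw [hperm, Measure.map_map hε hX]
        exact hsign ε fun i => by by_cases h : g.2 i <;> simp [ε, h]

end Measure

end Persistence

open MeasureTheory Persistence

theorem persistence_lower_bound_exchangeable_sign_invariant_general
    {Ω : Type*} [MeasurableSpace Ω] (P : Measure Ω)
    (n : ℕ) (hn : 1 ≤ n) (ξ : ℕ → Ω → ℝ)
    (hmeas : ∀ i, i < n → Measurable (ξ i))
    (hexch : ∀ σ : Equiv.Perm (Fin n),
      Measure.map (fun ω => fun i : Fin n => ξ (σ i) ω) P
        = Measure.map (fun ω => fun i : Fin n => ξ i ω) P)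
    (hsign : ∀ ε : Fin n → ℝ, (∀ i, ε i = 1 ∨ ε i = -1) →
      Measure.map (fun ω => fun i : Fin n => ε i * ξ i ω) P
        = Measure.map (fun ω => fun i : Fin n => ξ i ω) P)
    (S : ℕ → Ω → ℝ) (hS : ∀ k ω, S k ω = ∑ i ∈ Finset.range k, ξ i ω) :
    P {ω | 0 < ξ 0 ω} * ENNReal.ofReal ((Nat.choose (2 * (n - 1)) (n - 1) : ℝ) / 4 ^ (n - 1))
      ≤ P {ω | ∀ k, 1 ≤ k → k ≤ n → 0 < S k ω} := by
  obtain ⟨m, rfl⟩ : ∃ m, n = m + 1 := ⟨n - 1, by omega⟩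
  set X : Ω → Fin (m + 1) → ℝ := fun ω i => ξ i ω
  have hX : Measurable X := measurable_pi_lambda _ fun i => hmeas i i.2
  have hpos : MeasurableSet {v : Fin (m + 1) → ℝ | 0 < v 0} :=
    measurableSet_lt measurable_const (measurable_pi_apply 0)
  set ν := ((P.map X).restrict {v | 0 < v 0}).map Fin.tail
  have hmass : ν Set.univ = P {ω | 0 < ξ 0 ω} := by
    rw [Measure.map_apply measurable_tail .univ, Set.preimage_univ, Measure.restrict_apply_univ,
      Measure.map_apply hX hpos]
    rfl
  have hW := measurable_tail (measurableSet_nonnegWalks m)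
  have hevent : ν (nonnegWalks m) ≤ P {ω | ∀ k, 1 ≤ k → k ≤ m + 1 → 0 < S k ω} := by
    rw [Measure.map_apply measurable_tail (measurableSet_nonnegWalks m),
      Measure.restrict_apply hW, Measure.map_apply hX (hW.inter hpos)]
    refine measure_mono fun ω ⟨hwalk, hfirst⟩ k hk hkn => ?_
    obtain ⟨k, rfl⟩ : ∃ k', k = k' + 1 := ⟨k - 1, by omega⟩
    rw [hS, ← psum_extendZero_of_le _ hkn, psum_extendZero_succ]
    exact add_pos_of_pos_of_nonneg hfirst (hwalk k (by omega))
  rw [Nat.add_sub_cancel, mul_comm, ← hmass]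
  exact (ofReal_centralBinomRatio_mul_le_nonnegWalks ν
    (map_act_map_tail_restrict (map_act_map_eq hX hexch hsign))).trans hevent

/-- Lower bound for the strict persistence probability of an exchangeable sign-invariant vector:
`P(S_k > 0, 1 ≤ k ≤ n) ≥ P(ξ₁ > 0) · g(n-1)` with `g(m) = (2m choose m)/4^m`. -/
theorem persistence_lower_bound_exchangeable_sign_invariant
    {Ω : Type*} [MeasurableSpace Ω] (P : Measure Ω) [IsProbabilityMeasure P]
    (n : ℕ) (hn : 1 ≤ n) (ξ : ℕ → Ω → ℝ)
    (hmeas : ∀ i, i < n → Measurable (ξ i))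
    (hexch : ∀ σ : Equiv.Perm (Fin n),
      Measure.map (fun ω => fun i : Fin n => ξ (σ i) ω) P
        = Measure.map (fun ω => fun i : Fin n => ξ i ω) P)
    (hsign : ∀ ε : Fin n → ℝ, (∀ i, ε i = 1 ∨ ε i = -1) →
      Measure.map (fun ω => fun i : Fin n => ε i * ξ i ω) P
        = Measure.map (fun ω => fun i : Fin n => ξ i ω) P)
    (S : ℕ → Ω → ℝ) (hS : ∀ k ω, S k ω = ∑ i ∈ Finset.range k, ξ i ω) :
    P {ω | 0 < ξ 0 ω} * ENNReal.ofReal ((Nat.choose (2 * (n - 1)) (n - 1) : ℝ) / 4 ^ (n - 1))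
      ≤ P {ω | ∀ k, 1 ≤ k → k ≤ n → 0 < S k ω} :=
  persistence_lower_bound_exchangeable_sign_invariant_general P n hn ξ hmeas hexch hsign S hS
end

section
/- For every integer n ≥ 1, 1/√(π(n + 1/2)) ≤ g(n) ≤ 1/√(πn), where g(n) = (2n choose n)/4ⁿ. -/
/-!
Wallis' partial products `W n = ∏_{i<n} (2i+2)²/((2i+1)(2i+3))` equal `1 / (g(n)² (2n+1))`,
and comparing `∫₀^π sin^(2n+1)` with `∫₀^π sin^(2n)` pins them between `(2n+1)/(2n+2) · π/2`
and `π/2`.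
The upper bound on `W n` is the lower bound on `g(n)`; the lower bound on `W n` gives
`g(n)² ≤ (n+1) / (π (n+1/2)²)`, which is at most `1/(πn)` because `n(n+1) ≤ (n+1/2)²`.
-/

open Real Nat

theorem Real.Wallis.W_mul_sq_centralBinom_div_four_pow_mul (n : ℕ) :
    Wallis.W n * ((centralBinom n / 4 ^ n : ℝ) ^ 2 * (2 * n + 1)) = 1 := by
  have hfac : (centralBinom n * n ! * n ! : ℝ) = (2 * n)! := by
    rw [centralBinom_eq_two_mul_choose, two_mul]
    exact_mod_cast add_choose_mul_factorial_mul_factorial n n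
  have hpow : (2 : ℝ) ^ (4 * n) = (4 ^ n) ^ 2 := by
    rw [← pow_mul, show (4 : ℝ) = 2 ^ 2 by norm_num, ← pow_mul]
    ring_nf
  have := centralBinom_ne_zero n
  rw [Wallis.W_eq_factorial_ratio, ← hfac, hpow]
  field_simp

theorem one_div_pi_mul_le_sq_centralBinom_div_four_pow (n : ℕ) :
    1 / (π * (n + 1 / 2)) ≤ (centralBinom n / 4 ^ n : ℝ) ^ 2 := by
  set g : ℝ := centralBinom n / 4 ^ n
  have hW := Wallis.W_mul_sq_centralBinom_div_four_pow_mul n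
  have hle := mul_le_mul_of_nonneg_right (Wallis.W_le n)
    (by positivity : 0 ≤ g ^ 2 * (2 * n + 1))
  rw [div_le_iff₀ (by positivity)]
  linarith

theorem sq_centralBinom_div_four_pow_le_one_div_pi_mul {n : ℕ} (hn : n ≠ 0) :
    (centralBinom n / 4 ^ n : ℝ) ^ 2 ≤ 1 / (π * n) := by
  set g : ℝ := centralBinom n / 4 ^ n
  have hW := Wallis.W_mul_sq_centralBinom_div_four_pow_mul n
  have hle := mul_le_mul_of_nonneg_right (Wallis.le_W n)
    (by positivity : 0 ≤ g ^ 2 * (2 * n + 1))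
  have hn' : (0 : ℝ) < n := by positivity
  have hsharp : (2 * n + 1) ^ 2 * (g ^ 2 * π) ≤ 4 * (n + 1) := by
    rw [div_mul_eq_mul_div, div_mul_eq_mul_div, div_le_iff₀ (by positivity)] at hle
    nlinarith
  rw [le_div_iff₀ (by positivity)]
  nlinarith [sq_nonneg (g * π), pi_pos]

/-- For every `n ≥ 1`, `1/√(π(n+1/2)) ≤ g(n) ≤ 1/√(πn)` where `g(n) = (2n choose n)/4ⁿ`. -/
theorem central_binomial_sqrt_bounds (n : ℕ) (hn : 1 ≤ n) :
    1 / Real.sqrt (Real.pi * (n + 1 / 2)) ≤ (Nat.choose (2 * n) n : ℝ) / 4 ^ n ∧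
    (Nat.choose (2 * n) n : ℝ) / 4 ^ n ≤ 1 / Real.sqrt (Real.pi * n) := by
  have one_div_sqrt (x : ℝ) : 1 / √x = √(1 / x) := by simp [Real.sqrt_inv]
  rw [← centralBinom_eq_two_mul_choose, one_div_sqrt, one_div_sqrt]
  exact ⟨(Real.sqrt_le_left (by positivity)).mpr
      (one_div_pi_mul_le_sq_centralBinom_div_four_pow n),
    Real.le_sqrt_of_sq_le (sq_centralBinom_div_four_pow_le_one_div_pi_mul (by omega))⟩
end

section
/- Fix n ≥ 1 and x = (x₁, …, xₙ) ∈ [0,∞)ⁿ satisfying condition (H). Under P^(x), P(S_k > 0 for all 1 ≤ k ≤ n) = g(n) = P(S_k ≥ 0 for all 1 ≤ k ≤ n); in particular these probabilities do not depend on x. -/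
/-!
Split a signed arrangement of the steps at the first time its walk attains its maximum: reversing
the part before that time and negating the part after it gives a walk staying positive on a subset
`t` of the steps and a walk staying nonnegative on the complement, and this is a bijection
(Sparre Andersen's combinatorial lemma). Under (H) no partial sum vanishes, so "nonnegative" and
"positive" agree; the number `b s` of positive arrangements of a set `s` of `n` steps therefore
satisfies `∑_{t ⊆ s} b t * b (s \ t) = 2 ^ n * n!`. This recurrence determines `b s` by strong
induction, and `n! * centralBinom n / 2 ^ n` satisfies it because
`∑_{i + j = n} centralBinom i * centralBinom j = 4 ^ n`.
-/

open Finset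
open scoped Nat

theorem Nat.sum_antidiagonal_centralBinom_mul (n : ℕ) :
    ∑ p ∈ antidiagonal n, centralBinom p.1 * centralBinom p.2 = 4 ^ n := by
  set A : ℕ → ℕ := fun m => ∑ p ∈ antidiagonal m, centralBinom p.1 * centralBinom p.2
  -- swapping the antidiagonal averages the weight `p.1` to `m / 2`
  have weighted (m : ℕ) :
      2 * ∑ p ∈ antidiagonal m, p.1 * (centralBinom p.1 * centralBinom p.2) = m * A m := by
    rw [two_mul]
    nth_rw 2 [← Nat.sum_antidiagonal_swap]
    rw [← sum_add_distrib, mul_sum]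
    refine sum_congr rfl fun p hp => ?_
    rw [HasAntidiagonal.mem_antidiagonal] at hp
    simp only [Prod.fst_swap, Prod.snd_swap, ← hp]
    ring
  have step (m : ℕ) : (m + 1) * A (m + 1) = (m + 1) * (4 * A m) := by
    calc (m + 1) * A (m + 1)
        = 2 * ∑ p ∈ antidiagonal m, (p.1 + 1) * centralBinom (p.1 + 1) * centralBinom p.2 := by
          rw [← weighted, Nat.sum_antidiagonal_succ]
          simp [mul_assoc]
      _ = 4 * (2 * ∑ p ∈ antidiagonal m, p.1 * (centralBinom p.1 * centralBinom p.2) + A m) := by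
          simp only [succ_mul_centralBinom_succ, A, mul_sum, ← sum_add_distrib]
          refine sum_congr rfl fun p _ => ?_
          ring
      _ = (m + 1) * (4 * A m) := by rw [weighted]; ring
  induction n with
  | zero => simp
  | succ m ih =>
    change A (m + 1) = 4 ^ (m + 1)
    rw [Nat.eq_of_mul_eq_mul_left m.succ_pos (step m), show A m = 4 ^ m from ih, pow_succ]
    ring

theorem Nat.sum_powerset_factorial_mul_centralBinom {α : Type*} [DecidableEq α] (s : Finset α) :
    ∑ t ∈ s.powerset, (#t)! * centralBinom #t * ((#(s \ t))! * centralBinom #(s \ t))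
      = (#s)! * 4 ^ #s := by
  have hcard : ∀ t ∈ s.powerset, #(s \ t) = #s - #t := fun t ht =>
    card_sdiff_of_subset (mem_powerset.1 ht)
  rw [sum_congr rfl fun t ht => by rw [hcard t ht],
    sum_powerset_apply_card (fun k => k ! * centralBinom k * ((#s - k)! * centralBinom (#s - k))),
    ← Nat.sum_antidiagonal_centralBinom_mul,
    Nat.sum_antidiagonal_eq_sum_range_succ (fun i j => centralBinom i * centralBinom j), mul_sum]
  refine sum_congr rfl fun k hk => ?_
  rw [← Nat.choose_mul_factorial_mul_factorial (Nat.le_of_lt_succ (mem_range.1 hk)), smul_eq_mul]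
  ring

section Walks

variable {α : Type*} [AddCommGroup α]

theorem sum_take_reverse_append_map_neg_of_le (u v : List α) {j : ℕ} (hj : j ≤ u.length) :
    ((u.reverse ++ v.map Neg.neg).take j).sum = u.sum - (u.take (u.length - j)).sum := by
  rw [List.take_append_of_le_length (by simpa using hj), List.take_reverse, List.sum_reverse,
    eq_sub_iff_add_eq, add_comm, ← List.sum_append, List.take_append_drop]

theorem sum_take_reverse_append_map_neg_of_ge (u v : List α) {j : ℕ} (hj : u.length ≤ j) :
    ((u.reverse ++ v.map Neg.neg).take j).sum = u.sum - (v.take (j - u.length)).sum := by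
  rw [List.take_append, List.take_of_length_le (by simpa using hj), List.length_reverse,
    ← List.map_take, List.sum_append, List.sum_reverse, sub_eq_add_neg, List.sum_neg]

variable [LinearOrder α]

def AllPrefixSumsPos (l : List α) : Prop :=
  ∀ k ≤ l.length, 0 < k → 0 < (l.take k).sum

def AllPrefixSumsNonneg (l : List α) : Prop :=
  ∀ k ≤ l.length, 0 < k → 0 ≤ (l.take k).sum

instance : DecidablePred (AllPrefixSumsPos (α := α)) := fun l => by
  unfold AllPrefixSumsPos; infer_instance

instance : DecidablePred (AllPrefixSumsNonneg (α := α)) := fun l => by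
  unfold AllPrefixSumsNonneg; infer_instance

theorem AllPrefixSumsPos.allPrefixSumsNonneg {l : List α} (h : AllPrefixSumsPos l) :
    AllPrefixSumsNonneg l :=
  fun k hkl hk => (h k hkl hk).le

theorem exists_max_sum_take (l : List α) :
    ∃ k, k ≤ l.length ∧ ∀ j ≤ l.length, (l.take j).sum ≤ (l.take k).sum := by
  obtain ⟨k, hk, hmax⟩ := (range (l.length + 1)).exists_max_image (fun j => (l.take j).sum)
    nonempty_range_add_one
  exact ⟨k, Nat.le_of_lt_succ (mem_range.1 hk),
    fun j hj => hmax j (mem_range.2 (Nat.lt_succ_of_le hj))⟩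

def firstArgmaxSumTake (l : List α) : ℕ :=
  Nat.find (exists_max_sum_take l)

theorem firstArgmaxSumTake_eq_iff {l : List α} {k : ℕ} :
    firstArgmaxSumTake l = k ↔ k ≤ l.length ∧ (∀ j ≤ l.length, (l.take j).sum ≤ (l.take k).sum) ∧
      ∀ j < k, (l.take j).sum < (l.take k).sum := by
  rw [firstArgmaxSumTake, Nat.find_eq_iff, and_assoc]
  refine and_congr_right fun hk => and_congr_right fun hmax => forall₂_congr fun j hj => ?_
  exact ⟨fun h => lt_of_not_ge fun hge => h ⟨by omega, fun i hi => (hmax i hi).trans hge⟩,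
    fun h hj' => (hj'.2 k hk).not_gt h⟩

variable [IsOrderedAddMonoid α]

theorem firstArgmaxSumTake_reverse_append_map_neg_eq_length_iff {u v : List α} :
    firstArgmaxSumTake (u.reverse ++ v.map Neg.neg) = u.length ↔
      AllPrefixSumsPos u ∧ AllPrefixSumsNonneg v := by
  have hlen : (u.reverse ++ v.map Neg.neg).length = u.length + v.length := by simp
  have hpeak : ((u.reverse ++ v.map Neg.neg).take u.length).sum = u.sum := by simp
  rw [firstArgmaxSumTake_eq_iff, hpeak, hlen]
  constructor
  · rintro ⟨-, hmax, hlt⟩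
    refine ⟨fun i hiu hi => ?_, fun i hiv hi => ?_⟩
    · have := hlt (u.length - i) (by omega)
      rwa [sum_take_reverse_append_map_neg_of_le u v (by omega), Nat.sub_sub_self hiu,
        sub_lt_self_iff] at this
    · have := hmax (u.length + i) (by omega)
      rwa [sum_take_reverse_append_map_neg_of_ge u v (by omega), Nat.add_sub_cancel_left,
        sub_le_self_iff] at this
  · rintro ⟨hu, hv⟩
    have hu' : ∀ i ≤ u.length, 0 ≤ (u.take i).sum := fun i hi => by
      rcases i.eq_zero_or_pos with rfl | hi0
      · simp
      · exact (hu i hi hi0).le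
    refine ⟨by omega, fun j hj => ?_, fun j hj => ?_⟩
    · rcases le_total j u.length with hju | hju
      · rw [sum_take_reverse_append_map_neg_of_le u v hju]
        exact sub_le_self _ (hu' _ (by omega))
      · rw [sum_take_reverse_append_map_neg_of_ge u v hju]
        rcases (j - u.length).eq_zero_or_pos with h0 | h0
        · simp [h0]
        · exact sub_le_self _ (hv _ (by omega) h0)
    · rw [sum_take_reverse_append_map_neg_of_le u v hj.le]
      exact sub_lt_self _ (hu _ (by omega) (by omega))

theorem allPrefixSumsPos_reverse_take_firstArgmaxSumTake (l : List α) :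
    AllPrefixSumsPos (l.take (firstArgmaxSumTake l)).reverse ∧
      AllPrefixSumsNonneg ((l.drop (firstArgmaxSumTake l)).map Neg.neg) := by
  have hk : firstArgmaxSumTake l ≤ l.length := (firstArgmaxSumTake_eq_iff.1 rfl).1
  apply firstArgmaxSumTake_reverse_append_map_neg_eq_length_iff.1
  simp [hk]

end Walks

section DistinctSubsetSums

variable {α : Type*} [AddCommMonoid α] {s t : Finset α}

def DistinctSubsetSums (s : Finset α) : Prop :=
  Set.InjOn (fun t : Finset α => ∑ a ∈ t, a) s.powerset

theorem DistinctSubsetSums.mono (hs : DistinctSubsetSums s) (hts : t ⊆ s) :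
    DistinctSubsetSums t :=
  Set.InjOn.mono (coe_subset.2 (powerset_mono.2 hts)) hs

theorem Function.Injective.of_sum_finset {ι : Type*} {x : ι → α}
    (h : Function.Injective fun I : Finset ι => ∑ i ∈ I, x i) : Function.Injective x :=
  fun i j hij => singleton_injective (h (by simpa using hij))

theorem distinctSubsetSums_image [DecidableEq α] {ι : Type*} {x : ι → α}
    (h : Function.Injective fun I : Finset ι => ∑ i ∈ I, x i) (J : Finset ι) :
    DistinctSubsetSums (J.image x) := by
  intro t ht u hu htu
  obtain ⟨I, -, rfl⟩ := subset_image_iff.1 (mem_powerset.1 (mem_coe.1 ht))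
  obtain ⟨K, -, rfl⟩ := subset_image_iff.1 (mem_powerset.1 (mem_coe.1 hu))
  have hinj := h.of_sum_finset
  simp only [sum_image hinj.injOn] at htu
  rw [h htu]

end DistinctSubsetSums

theorem List.length_sections {β : Type*} (L : List (List β)) :
    L.sections.length = (L.map List.length).prod := by
  induction L with
  | nil => rfl
  | cons l L ih => simp [List.sections, List.length_flatMap, ih, mul_comm]

section Arrangements

variable {α : Type*} [AddCommGroup α] [LinearOrder α] {s t : Finset α} {l u v : List α}

/-- The orderings of `s` with a sign attached to each element. The `sections` construction only
supplies a finite superset; membership is the multiset condition (see `mem_arrangements`). -/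
noncomputable def arrangements (s : Finset α) : Finset (List α) :=
  {l ∈ (s.toList.permutations.flatMap fun p => (p.map fun a => [a, -a]).sections).toFinset |
    (l.map abs : Multiset α) = s.val}

theorem mem_arrangements : l ∈ arrangements s ↔ (l.map abs : Multiset α) = s.val := by
  rw [arrangements, mem_filter, and_iff_right_iff_imp]
  intro h
  rw [List.mem_toFinset, List.mem_flatMap]
  refine ⟨l.map abs, List.mem_permutations.2 ?_, ?_⟩
  · rw [← Multiset.coe_eq_coe, h, Finset.coe_toList]
  · rw [List.mem_sections, List.map_map, List.forall₂_map_right_iff, List.forall₂_same]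
    intro b _
    rcases abs_choice b with h | h <;> simp [h]

theorem card_arrangements_le (s : Finset α) : #(arrangements s) ≤ 2 ^ #s * (#s)! := by
  refine (card_filter_le _ _).trans ((List.toFinset_card_le _).trans_eq ?_)
  rw [List.length_flatMap, List.map_congr_left (g := fun _ => 2 ^ #s), List.map_const',
    List.sum_replicate, List.length_permutations, length_toList, smul_eq_mul, mul_comm]
  intro p hp
  rw [List.length_sections, List.map_map, List.map_congr_left (g := fun _ => 2), List.map_const',
    List.prod_replicate, (List.mem_permutations.1 hp).length_eq, length_toList]
  simp

theorem arrangements_empty : arrangements (∅ : Finset α) = {[]} := by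
  ext l
  simp [mem_arrangements]

theorem nodup_map_abs_of_mem_arrangements (h : l ∈ arrangements s) : (l.map abs).Nodup := by
  rw [← Multiset.coe_nodup, mem_arrangements.1 h]
  exact s.nodup

theorem mem_arrangements_toFinset_map_abs (h : (l.map abs).Nodup) :
    l ∈ arrangements (l.map abs).toFinset := by
  rw [mem_arrangements, List.toFinset_val, h.dedup]

theorem toFinset_map_abs_of_mem_arrangements (h : l ∈ arrangements s) :
    (l.map abs).toFinset = s := by
  ext a
  rw [List.mem_toFinset, ← Multiset.mem_coe, mem_arrangements.1 h, Finset.mem_val]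

theorem reverse_mem_arrangements_iff : l.reverse ∈ arrangements s ↔ l ∈ arrangements s := by
  simp [mem_arrangements, List.map_reverse]

theorem map_neg_mem_arrangements_iff : l.map Neg.neg ∈ arrangements s ↔ l ∈ arrangements s := by
  simp [mem_arrangements, Function.comp_def, abs_neg]

theorem append_mem_arrangements (hu : u ∈ arrangements t) (hv : v ∈ arrangements (s \ t))
    (hts : t ⊆ s) : u ++ v ∈ arrangements s := by
  rw [mem_arrangements] at hu hv ⊢
  rw [List.map_append, ← Multiset.coe_add, hu, hv, sdiff_val,
    add_tsub_cancel_of_le (val_le_iff.2 hts)]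

theorem exists_of_append_mem_arrangements (h : u ++ v ∈ arrangements s) :
    ∃ t ⊆ s, u ∈ arrangements t ∧ v ∈ arrangements (s \ t) := by
  have hnd := nodup_map_abs_of_mem_arrangements h
  rw [List.map_append] at hnd
  have hu := mem_arrangements_toFinset_map_abs (List.nodup_append.1 hnd).1
  rw [mem_arrangements, List.map_append, ← Multiset.coe_add] at h
  rw [mem_arrangements] at hu
  have hle : (u.map abs).toFinset.val ≤ s.val := by
    rw [← hu, ← h]
    exact Multiset.le_add_right _ _
  refine ⟨_, val_le_iff.1 hle, mem_arrangements.2 hu, ?_⟩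
  rw [mem_arrangements, sdiff_val, ← h, hu, add_tsub_cancel_left]

variable [IsOrderedAddMonoid α]

theorem card_arrangements_eq_sum_powerset (s : Finset α) :
    #(arrangements s) = ∑ t ∈ s.powerset,
      #{u ∈ arrangements t | AllPrefixSumsPos u} *
        #{v ∈ arrangements (s \ t) | AllPrefixSumsNonneg v} := by
  simp_rw [← card_product]
  rw [← card_sigma]
  refine card_nbij'
    (fun l => ⟨((l.take (firstArgmaxSumTake l)).map abs).toFinset,
      (l.take (firstArgmaxSumTake l)).reverse, (l.drop (firstArgmaxSumTake l)).map Neg.neg⟩)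
    (fun p => p.2.1.reverse ++ p.2.2.map Neg.neg) ?_ ?_ ?_ ?_
  · intro l hl
    obtain ⟨hpos, hnonneg⟩ := allPrefixSumsPos_reverse_take_firstArgmaxSumTake l
    dsimp only
    set k := firstArgmaxSumTake l
    rw [mem_coe, ← List.take_append_drop k l] at hl
    obtain ⟨t, hts, ht, hd⟩ := exists_of_append_mem_arrangements hl
    rw [toFinset_map_abs_of_mem_arrangements ht]
    simp only [coe_sigma, Set.mem_sigma_iff, mem_coe, mem_powerset, mem_product, mem_filter,
      reverse_mem_arrangements_iff, map_neg_mem_arrangements_iff]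
    exact ⟨hts, ⟨ht, hpos⟩, hd, hnonneg⟩
  · rintro ⟨t, u, v⟩ h
    simp only [coe_sigma, Set.mem_sigma_iff, mem_coe, mem_powerset, mem_product, mem_filter] at h
    exact append_mem_arrangements (reverse_mem_arrangements_iff.2 h.2.1.1)
      (map_neg_mem_arrangements_iff.2 h.2.2.1) h.1
  · intro l _
    simp
  · rintro ⟨t, u, v⟩ h
    simp only [coe_sigma, Set.mem_sigma_iff, mem_coe, mem_powerset, mem_product, mem_filter] at h
    have hpeak := firstArgmaxSumTake_reverse_append_map_neg_eq_length_iff.2 ⟨h.2.1.2, h.2.2.2⟩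
    have hu := reverse_mem_arrangements_iff.2 h.2.1.1
    simp only [hpeak]
    rw [List.take_left' (List.length_reverse), List.drop_left' (List.length_reverse),
      toFinset_map_abs_of_mem_arrangements hu]
    simp

theorem sum_eq_sum_ite_of_mem_arrangements (h : l ∈ arrangements s) :
    l.sum = ∑ a ∈ s, if a ∈ l then a else -a := by
  have hnd := nodup_map_abs_of_mem_arrangements h
  rw [sum_eq_multiset_sum, ← mem_arrangements.1 h, Multiset.map_coe, Multiset.sum_coe,
    List.map_map]
  conv_lhs => rw [← List.map_id l]
  congr 1
  refine List.map_congr_left fun b hb => ?_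
  rcases le_or_gt 0 b with hb0 | hb0
  · simp [abs_of_nonneg hb0, hb]
  · have hneg : -b ∉ l := fun hneg => by
      have hb' : -b = b := List.inj_on_of_nodup_map hnd hneg hb (abs_neg b)
      exact lt_asymm hb0 (hb' ▸ neg_pos.2 hb0)
    simp [abs_of_neg hb0, hneg]

theorem sum_ne_zero_of_mem_arrangements (hs : DistinctSubsetSums s) (h : l ∈ arrangements s)
    (hl : l ≠ []) : l.sum ≠ 0 := by
  rw [sum_eq_sum_ite_of_mem_arrangements h, sum_ite, sum_neg_distrib, ← sub_eq_add_neg,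
    sub_ne_zero]
  intro heq
  obtain ⟨b, hb⟩ := List.exists_mem_of_ne_nil l hl
  have hbs : |b| ∈ s := by
    rw [← Finset.mem_val, ← mem_arrangements.1 h, Multiset.mem_coe]
    exact List.mem_map_of_mem hb
  have hsplit := hs (mem_coe.2 (mem_powerset.2 (filter_subset _ _)))
    (mem_coe.2 (mem_powerset.2 (filter_subset _ _))) heq
  simpa [hbs] using congrArg (|b| ∈ ·) hsplit

theorem allPrefixSumsNonneg_iff_allPrefixSumsPos (hs : DistinctSubsetSums s)
    (h : l ∈ arrangements s) : AllPrefixSumsNonneg l ↔ AllPrefixSumsPos l := by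
  refine ⟨fun hl k hkl hk => (hl k hkl hk).lt_of_ne' ?_, AllPrefixSumsPos.allPrefixSumsNonneg⟩
  rw [← List.take_append_drop k l] at h
  obtain ⟨t, hts, ht, -⟩ := exists_of_append_mem_arrangements h
  refine sum_ne_zero_of_mem_arrangements (hs.mono hts) ht ?_
  simp only [ne_eq, List.take_eq_nil_iff, not_or]
  exact ⟨hk.ne', List.ne_nil_of_length_pos (hk.trans_le hkl)⟩

end Arrangements

section SignedWalk

theorem card_signs_perms (n : ℕ) :
    Fintype.card ((Fin n → Bool) × Equiv.Perm (Fin n)) = 2 ^ n * n ! := by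
  simp [Fintype.card_perm]

variable {α : Type*} [AddCommGroup α] {n : ℕ}

def signedWalk (x : Fin n → α) (ω : (Fin n → Bool) × Equiv.Perm (Fin n)) : List α :=
  List.ofFn fun i => if ω.1 i then x (ω.2 i) else -x (ω.2 i)

@[simp]
theorem length_signedWalk (x : Fin n → α) (ω : (Fin n → Bool) × Equiv.Perm (Fin n)) :
    (signedWalk x ω).length = n := by
  simp [signedWalk]

variable [LinearOrder α] [IsOrderedAddMonoid α] {x : Fin n → α} {s : Finset α}

theorem signedWalk_mem_arrangements (hx : ∀ i, 0 ≤ x i) (hinj : Function.Injective x)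
    (ω : (Fin n → Bool) × Equiv.Perm (Fin n)) :
    signedWalk x ω ∈ arrangements (univ.image x) := by
  have habs : abs ∘ (fun i => if ω.1 i then x (ω.2 i) else -x (ω.2 i)) = x ∘ ω.2 :=
    funext fun i => by by_cases h : ω.1 i <;> simp [h, abs_of_nonneg (hx _)]
  rw [mem_arrangements, image_val_of_injOn hinj.injOn, signedWalk, List.map_ofFn, habs,
    ← Fin.univ_val_map, ← Multiset.map_map, Multiset.map_univ_val_equiv]

theorem signedWalk_injective (hx : ∀ i, 0 < x i) (hinj : Function.Injective x) :
    Function.Injective (signedWalk x) := by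
  rintro ⟨ε, σ⟩ ⟨ε', σ'⟩ h
  have key (i : Fin n) : ε i = ε' i ∧ σ i = σ' i := by
    have hi := congrFun (List.ofFn_injective h) i
    have hne (a b : Fin n) : x a ≠ -x b := ne_of_gt ((neg_neg_of_pos (hx b)).trans (hx a))
    cases hε : ε i <;> cases hε' : ε' i <;> simp only [hε, hε'] at hi
    · exact ⟨rfl, hinj (neg_inj.1 hi)⟩
    · exact absurd hi.symm (hne _ _)
    · exact absurd hi (hne _ _)
    · exact ⟨rfl, hinj hi⟩
  exact Prod.ext (funext fun i => (key i).1) (Equiv.ext fun i => (key i).2)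

theorem image_signedWalk (hx : ∀ i, 0 < x i) (hinj : Function.Injective x) :
    univ.image (signedWalk x) = arrangements (univ.image x) := by
  refine eq_of_subset_of_card_le
    (image_subset_iff.2 fun ω _ => signedWalk_mem_arrangements (fun i => (hx i).le) hinj ω) ?_
  rw [card_image_of_injective _ (signedWalk_injective hx hinj), card_univ, card_signs_perms]
  simpa [card_image_of_injective _ hinj] using card_arrangements_le (univ.image x)

theorem card_arrangements (hs : ∀ a ∈ s, 0 < a) : #(arrangements s) = 2 ^ #s * (#s)! := by
  have hx (i : Fin #s) : 0 < s.orderEmbOfFin rfl i := hs _ (s.orderEmbOfFin_mem rfl i)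
  have h := image_signedWalk hx (s.orderEmbOfFin rfl).injective
  rw [image_orderEmbOfFin_univ] at h
  rw [← h, card_image_of_injective _ (signedWalk_injective hx (s.orderEmbOfFin rfl).injective),
    card_univ, card_signs_perms]

theorem card_filter_signedWalk (hx : ∀ i, 0 < x i) (hinj : Function.Injective x)
    (p : List α → Prop) [DecidablePred p] :
    #{ω | p (signedWalk x ω)} = #{l ∈ arrangements (univ.image x) | p l} := by
  rw [← image_signedWalk hx hinj, filter_image,
    card_image_of_injective _ (signedWalk_injective hx hinj)]

end SignedWalk

section Counting

variable {α : Type*} [AddCommGroup α] [LinearOrder α] [IsOrderedAddMonoid α] {s : Finset α}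

theorem sum_powerset_card_filter_allPrefixSumsPos_mul (hpos : ∀ a ∈ s, 0 < a)
    (hs : DistinctSubsetSums s) :
    ∑ t ∈ s.powerset, #{u ∈ arrangements t | AllPrefixSumsPos u} *
      #{v ∈ arrangements (s \ t) | AllPrefixSumsPos v} = 2 ^ #s * (#s)! := by
  rw [← card_arrangements hpos, card_arrangements_eq_sum_powerset]
  refine sum_congr rfl fun t _ => ?_
  rw [filter_congr fun v hv => allPrefixSumsNonneg_iff_allPrefixSumsPos (hs.mono sdiff_subset) hv]

theorem card_filter_allPrefixSumsPos_mul_two_pow (hpos : ∀ a ∈ s, 0 < a)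
    (hs : DistinctSubsetSums s) :
    #{l ∈ arrangements s | AllPrefixSumsPos l} * 2 ^ #s = (#s)! * Nat.centralBinom #s := by
  induction s using Finset.strongInduction with
  | H s ih =>
  set b : Finset α → ℕ := fun t => #{l ∈ arrangements t | AllPrefixSumsPos l} * 2 ^ #t
  change b s = _
  have hb_empty : b ∅ = 1 := by
    have hnil : AllPrefixSumsPos ([] : List α) := fun k hk hk0 => by simp at hk; omega
    simp [b, arrangements_empty, filter_singleton, hnil]
  rcases s.eq_empty_or_nonempty with rfl | hne
  · simpa using hb_empty
  have hrec : ∑ t ∈ s.powerset, b t * b (s \ t) = (#s)! * 4 ^ #s := by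
    calc ∑ t ∈ s.powerset, b t * b (s \ t)
        = 2 ^ #s * ∑ t ∈ s.powerset, #{u ∈ arrangements t | AllPrefixSumsPos u} *
            #{v ∈ arrangements (s \ t) | AllPrefixSumsPos v} := by
          rw [mul_sum]
          refine sum_congr rfl fun t ht => ?_
          rw [← add_tsub_cancel_of_le (card_le_card (mem_powerset.1 ht)),
            ← card_sdiff_of_subset (mem_powerset.1 ht), pow_add]
          ring
      _ = (#s)! * 4 ^ #s := by
          rw [sum_powerset_card_filter_allPrefixSumsPos_mul hpos hs,
            show (4 : ℕ) = 2 * 2 from rfl, mul_pow]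
          ring
  have hG := Nat.sum_powerset_factorial_mul_centralBinom s
  have hagree : ∀ t ∈ (s.powerset.erase ∅).erase s, b t * b (s \ t) =
      (#t)! * Nat.centralBinom #t * ((#(s \ t))! * Nat.centralBinom #(s \ t)) := by
    intro t ht
    simp only [mem_erase, mem_powerset] at ht
    have hsub : t ⊂ s := ssubset_of_subset_of_ne ht.2.2 ht.1
    have hsdiff : s \ t ⊂ s := sdiff_ssubset hsub.subset (nonempty_iff_ne_empty.2 ht.2.1)
    rw [show b t = _ from ih t hsub (fun a ha => hpos a (hsub.subset ha)) (hs.mono hsub.subset),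
      show b (s \ t) = _ from
        ih (s \ t) hsdiff (fun a ha => hpos a (hsdiff.subset ha)) (hs.mono hsdiff.subset)]
  -- both recurrences differ only in the terms `t = ∅` and `t = s`, which are `b s` resp.
  -- `(#s)! * centralBinom #s` twice
  have hempty : ∅ ∈ s.powerset := empty_mem_powerset s
  have hself : s ∈ s.powerset.erase ∅ := mem_erase.2 ⟨hne.ne_empty, mem_powerset_self s⟩
  rw [← add_sum_erase _ _ hempty, ← add_sum_erase _ _ hself, sum_congr rfl hagree] at hrec
  rw [← add_sum_erase _ _ hempty, ← add_sum_erase _ _ hself] at hG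
  simp only [sdiff_empty, sdiff_self, bot_eq_empty, hb_empty, card_empty, Nat.factorial_zero,
    Nat.centralBinom_zero, one_mul, mul_one] at hrec hG
  omega

theorem toMeasure_uniformOfFintype_setOf_signedWalk {n : ℕ} {x : Fin n → α}
    (hx : ∀ i, 0 < x i) (hinj : Function.Injective x) (hdist : DistinctSubsetSums (univ.image x))
    {p : List α → Prop} (hp : ∀ l ∈ arrangements (univ.image x), p l ↔ AllPrefixSumsPos l) :
    @PMF.toMeasure _ ⊤ (PMF.uniformOfFintype ((Fin n → Bool) × Equiv.Perm (Fin n)))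
        {ω | p (signedWalk x ω)} = ENNReal.ofReal ((Nat.choose (2 * n) n : ℝ) / 4 ^ n) := by
  have := Classical.decPred p
  have hcount : #{ω | p (signedWalk x ω)} * 2 ^ n = n ! * Nat.centralBinom n := by
    rw [card_filter_signedWalk hx hinj, filter_congr hp]
    simpa [card_image_of_injective _ hinj] using
      card_filter_allPrefixSumsPos_mul_two_pow (by simpa using fun i => hx i) hdist
  rw [@PMF.toMeasure_uniformOfFintype_apply _ _ _ _ ⊤ MeasurableSpace.measurableSet_top]
  have key : 4 ^ n * #{ω | p (signedWalk x ω)} = 2 ^ n * n ! * (2 * n).choose n := by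
    rw [← Nat.centralBinom_eq_two_mul_choose, mul_assoc (2 ^ n), ← hcount,
      show (4 : ℕ) = 2 * 2 from rfl, mul_pow]
    ring
  simp only [Fintype.card_subtype, Set.mem_ofPred_eq, card_signs_perms]
  rw [ENNReal.ofReal_div_of_pos (by positivity), ENNReal.ofReal_natCast,
    ENNReal.ofReal_pow zero_le_four, ENNReal.ofReal_ofNat,
    ENNReal.div_eq_div_iff (by positivity) (by simp) (by positivity)
      (ENNReal.natCast_ne_top _)]
  exact_mod_cast key

end Counting

open MeasureTheory

theorem sparre_andersen_uniform_model_no_ties_general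
    (n : ℕ) (x : Fin n → ℝ) (hx : ∀ i, 0 ≤ x i)
    (hH : ∀ I J : Finset (Fin n), I ≠ J → ∑ i ∈ I, x i ≠ ∑ j ∈ J, x j) :
    let Ω := (Fin n → Bool) × Equiv.Perm (Fin n)
    let P := @PMF.toMeasure Ω ⊤ (PMF.uniformOfFintype Ω)
    let S : ℕ → Ω → ℝ := fun k ω =>
      ∑ i ∈ Finset.univ.filter (fun i : Fin n => (i : ℕ) < k),
        (if ω.1 i then (1 : ℝ) else -1) * x (ω.2 i)
    P {ω | ∀ k, 1 ≤ k → k ≤ n → 0 < S k ω}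
        = ENNReal.ofReal ((Nat.choose (2 * n) n : ℝ) / 4 ^ n) ∧
    P {ω | ∀ k, 1 ≤ k → k ≤ n → 0 ≤ S k ω}
        = ENNReal.ofReal ((Nat.choose (2 * n) n : ℝ) / 4 ^ n) := by
  intro Ω P S
  have hsum : Function.Injective fun I : Finset (Fin n) => ∑ i ∈ I, x i :=
    fun I J h => by_contra fun hIJ => hH I J hIJ h
  have hinj := hsum.of_sum_finset
  have hxpos (i : Fin n) : 0 < x i :=
    (hx i).lt_of_ne' fun h0 => singleton_ne_empty i (hsum (by simp [h0]))
  have hdist := distinctSubsetSums_image hsum univ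
  have hS (k : ℕ) (ω : Ω) : S k ω = ((signedWalk x ω).take k).sum := by
    simp only [S, signedWalk, List.sum_take_ofFn, ite_mul, one_mul, neg_one_mul]
  have hpos : {ω : Ω | ∀ k, 1 ≤ k → k ≤ n → 0 < S k ω} =
      {ω | AllPrefixSumsPos (signedWalk x ω)} := by
    ext ω
    simp only [Set.mem_ofPred_eq, AllPrefixSumsPos, length_signedWalk, hS]
    exact ⟨fun h k hkn hk => h k hk hkn, fun h k hk hkn => h k hkn hk⟩
  have hnonneg : {ω : Ω | ∀ k, 1 ≤ k → k ≤ n → 0 ≤ S k ω} =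
      {ω | AllPrefixSumsNonneg (signedWalk x ω)} := by
    ext ω
    simp only [Set.mem_ofPred_eq, AllPrefixSumsNonneg, length_signedWalk, hS]
    exact ⟨fun h k hkn hk => h k hk hkn, fun h k hk hkn => h k hkn hk⟩
  rw [hpos, hnonneg]
  exact ⟨toMeasure_uniformOfFintype_setOf_signedWalk hxpos hinj hdist fun _ _ => Iff.rfl,
    toMeasure_uniformOfFintype_setOf_signedWalk hxpos hinj hdist fun _ hl =>
      allPrefixSumsNonneg_iff_allPrefixSumsPos hdist hl⟩

/-- Under the law `P^(x)` obtained by uniformly permuting the coordinates of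
`x ∈ [0,∞)ⁿ` and attaching i.i.d. uniform random signs, if `x` satisfies condition (H)
(all subset-sums are distinct), then
`P(S_k > 0, 1 ≤ k ≤ n) = g(n) = P(S_k ≥ 0, 1 ≤ k ≤ n)` with `g(n) = (2n choose n)/4ⁿ`;
in particular these probabilities do not depend on `x`. -/
theorem sparre_andersen_uniform_model_no_ties
    (n : ℕ) (hn : 1 ≤ n) (x : Fin n → ℝ) (hx : ∀ i, 0 ≤ x i)
    (hH : ∀ I J : Finset (Fin n), I ≠ J → ∑ i ∈ I, x i ≠ ∑ j ∈ J, x j) :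
    let Ω := (Fin n → Bool) × Equiv.Perm (Fin n)
    let P := @PMF.toMeasure Ω ⊤ (PMF.uniformOfFintype Ω)
    let S : ℕ → Ω → ℝ := fun k ω =>
      ∑ i ∈ Finset.univ.filter (fun i : Fin n => (i : ℕ) < k),
        (if ω.1 i then (1 : ℝ) else -1) * x (ω.2 i)
    P {ω | ∀ k, 1 ≤ k → k ≤ n → 0 < S k ω}
        = ENNReal.ofReal ((Nat.choose (2 * n) n : ℝ) / 4 ^ n) ∧
    P {ω | ∀ k, 1 ≤ k → k ≤ n → 0 ≤ S k ω}
        = ENNReal.ofReal ((Nat.choose (2 * n) n : ℝ) / 4 ^ n) :=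
  sparre_andersen_uniform_model_no_ties_general n x hx hH
end
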